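/- arXiv:1902.00618 — 13 statements merged into one kernel-verified Lean document; each statement's English description precedes it below -/
import Mathlib

section
/- There exists a twice continuously differentiable function f: ℝ × ℝ → ℝ (namely f(x,y) = sin(x+y)) that has no local Nash equilibrium: no point (x*,y*) ∈ ℝ² admits a δ > 0 such that f(x*,y) ≤ f(x*,y*) ≤ f(x,y*) for all (x,y) with |x−x*| ≤ δ and |y−y*| ≤ δ. -/
/-- There exists a twice continuously differentiable function `f : ℝ × ℝ → ℝ`
(namely `f(x,y) = sin (x+y)`) that has no local Nash equilibrium. -/
theorem stmt_0 :
    ∃ f : ℝ → ℝ → ℝ,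
      f = (fun x y => Real.sin (x + y)) ∧
      ContDiff ℝ 2 (fun p : ℝ × ℝ => f p.1 p.2) ∧
      ∀ xs ys : ℝ, ¬ ∃ δ > (0 : ℝ), ∀ x y : ℝ,
        |x - xs| ≤ δ → |y - ys| ≤ δ →
          f xs y ≤ f xs ys ∧ f xs ys ≤ f x ys := by
  refine ⟨fun x y => Real.sin (x + y), rfl, ?_, ?_⟩
  · exact Real.contDiff_sin.comp (contDiff_fst.add contDiff_snd)
  · rintro xs ys ⟨δ, hδ, h⟩
    set s := xs + ys with hs
    have key : ∀ t : ℝ, |t| ≤ δ → Real.sin (s + t) = Real.sin s := by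
      intro t ht
      have h1 := (h (xs + t) ys (by simpa using ht) (by simp [abs_nonneg, hδ.le])).2
      have h2 := (h xs (ys + t) (by simp [abs_nonneg, hδ.le]) (by simpa using ht)).1
      have e1 : xs + t + ys = s + t := by ring
      have e2 : xs + (ys + t) = s + t := by ring
      simp only at h1 h2
      rw [e1] at h1
      rw [e2] at h2
      linarith
    set a := min δ 1 with ha
    have ha0 : 0 < a := lt_min hδ one_pos
    have ha1 : a ≤ 1 := min_le_right _ _
    have haδ : a ≤ δ := min_le_left _ _
    have k1 := key a (by rwa [abs_of_pos ha0])
    have k2 := key (-a) (by rwa [abs_neg, abs_of_pos ha0])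
    rw [Real.sin_add] at k1
    rw [Real.sin_add, Real.sin_neg, Real.cos_neg] at k2
    have hsina : 0 < Real.sin a :=
      Real.sin_pos_of_pos_of_lt_pi ha0 (lt_of_le_of_lt ha1 (by linarith [Real.pi_gt_three]))
    have hcoss : Real.cos s = 0 := by
      have : Real.cos s * Real.sin a = 0 := by linarith
      rcases mul_eq_zero.1 this with h' | h'
      · exact h'
      · linarith
    have hsins : Real.sin s ≠ 0 := by
      intro h'
      have := Real.sin_sq_add_cos_sq s
      rw [h', hcoss] at this
      norm_num at this
    have hcosa : Real.cos a = 1 := by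
      have : Real.sin s * (Real.cos a - 1) = 0 := by linarith
      rcases mul_eq_zero.1 this with h' | h'
      · exact absurd h' hsins
      · linarith
    have : Real.cos a < 1 := by
      have := Real.cos_lt_cos_of_nonneg_of_le_pi le_rfl
        (le_trans ha1 (by linarith [Real.pi_gt_three])) ha0
      simpa using this
    linarith
end

section
/- Let f: ℝ^{d₁} × ℝ^{d₂} → ℝ be continuous. Then (x*,y*) is a local minimax point of f if and only if y* is a local maximum of f(x*,·) and there exists ε₀ > 0 such that for every ε ∈ (0, ε₀], x* is a local minimum of the function g_ε defined by g_ε(x) := max_{y : ‖y−y*‖ ≤ ε} f(x,y). -/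
/-!
A local minimax point gives the local minimality of `g_ε` directly, because `g_ε` is monotone
in `ε` and eventually `h δ < ε`. Conversely, local minimality of `g_ε` at `xs` provides for every
`ε` a radius `δ` on which `f xs ys ≤ g_ε`; the function `h` is obtained by inverting this
relation, `h δ = inf {ε | δ works for ε} + δ`.
-/

open Metric Filter Set Topology

noncomputable section

/-- `(xs, ys)` is a local minimax point of `f`: there are `δ₀ > 0` and
`h : (0, δ₀] → [0, ∞)` with `h(δ) → 0` as `δ → 0` such that for all
`δ ∈ (0, δ₀]` and all `(x, y)` with `‖x - xs‖ ≤ δ`, `‖y - ys‖ ≤ δ`,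
`f xs y ≤ f xs ys ≤ max_{‖y' - ys‖ ≤ h δ} f x y'`. -/
def IsLocalMinimax {d₁ d₂ : ℕ}
    (f : EuclideanSpace ℝ (Fin d₁) → EuclideanSpace ℝ (Fin d₂) → ℝ)
    (xs : EuclideanSpace ℝ (Fin d₁)) (ys : EuclideanSpace ℝ (Fin d₂)) : Prop :=
  ∃ δ₀ > (0 : ℝ), ∃ h : ℝ → ℝ,
    (∀ δ ∈ Set.Ioc (0 : ℝ) δ₀, 0 ≤ h δ) ∧
    Tendsto h (nhdsWithin 0 (Set.Ioi 0)) (nhds 0) ∧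
    ∀ δ ∈ Set.Ioc (0 : ℝ) δ₀, ∀ x y,
      ‖x - xs‖ ≤ δ → ‖y - ys‖ ≤ δ →
        f xs y ≤ f xs ys ∧ f xs ys ≤ sSup (f x '' closedBall ys (h δ))

/-- The function `g_ε` of the statement. -/
def ballSup {X Y : Type*} [PseudoMetricSpace Y] (f : X → Y → ℝ) (y₀ : Y) (ε : ℝ) (x : X) : ℝ :=
  sSup (f x '' closedBall y₀ ε)

section ballSup

variable {X Y : Type*} [PseudoMetricSpace Y] {f : X → Y → ℝ} {y₀ : Y} {ε ε' : ℝ} {x : X}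

theorem le_ballSup [ProperSpace Y] (hf : Continuous (f x)) (hε : 0 ≤ ε) :
    f x y₀ ≤ ballSup f y₀ ε x :=
  le_csSup ((isCompact_closedBall y₀ ε).bddAbove_image hf.continuousOn)
    (mem_image_of_mem _ (mem_closedBall_self hε))

theorem ballSup_mono [ProperSpace Y] (hf : Continuous (f x)) (hε : 0 ≤ ε) (hεε' : ε ≤ ε') :
    ballSup f y₀ ε x ≤ ballSup f y₀ ε' x :=
  csSup_le_csSup ((isCompact_closedBall y₀ ε').bddAbove_image hf.continuousOn)
    ((nonempty_closedBall.2 hε).image _) (image_mono (closedBall_subset_closedBall hεε'))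

theorem ballSup_eq_of_forall_le (hε : 0 ≤ ε) (hle : ∀ y ∈ closedBall y₀ ε, f x y ≤ f x y₀) :
    ballSup f y₀ ε x = f x y₀ :=
  IsGreatest.csSup_eq ⟨mem_image_of_mem _ (mem_closedBall_self hε), forall_mem_image.2 hle⟩

end ballSup

theorem exists_tendsto_zero_eventually {P : ℝ → ℝ → Prop}
    (hmono : ∀ δ ε ε', 0 < ε → ε ≤ ε' → P δ ε → P δ ε')
    (hanti : ∀ δ δ' ε, δ' ≤ δ → P δ ε → P δ' ε)
    (hP : ∀ ε > 0, ∃ ρ > 0, P ρ ε) :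
    ∃ h : ℝ → ℝ, Tendsto h (𝓝[>] 0) (𝓝 0) ∧ ∀ᶠ δ in 𝓝[>] 0, 0 ≤ h δ ∧ P δ (h δ) := by
  set S : ℝ → Set ℝ := fun δ => {ε | 0 < ε ∧ P δ ε}
  have hS_bdd : ∀ δ, BddBelow (S δ) := fun δ => ⟨0, fun ε hε => hε.1.le⟩
  have hS_nonneg : ∀ δ, 0 ≤ sInf (S δ) := fun δ => Real.sInf_nonneg fun ε hε => hε.1.le
  have hS_mem : ∀ ε > 0, ∀ᶠ δ in 𝓝[>] 0, ε ∈ S δ := by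
    intro ε hε
    obtain ⟨ρ, hρ, hPρ⟩ := hP ε hε
    filter_upwards [Ioc_mem_nhdsGT hρ] with δ hδ
    exact ⟨hε, hanti ρ δ ε hδ.2 hPρ⟩
  have hS_tendsto : Tendsto (fun δ => sInf (S δ)) (𝓝[>] 0) (𝓝 0) := by
    refine tendsto_order.2 ⟨fun a ha => .of_forall fun δ => ha.trans_le (hS_nonneg δ),
      fun a ha => ?_⟩
    filter_upwards [hS_mem (a / 2) (half_pos ha)] with δ hδ
    exact (csInf_le (hS_bdd δ) hδ).trans_lt (half_lt_self ha)
  -- The infimum need not be attained; adding `δ` puts an admissible `ε` strictly below `h δ`.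
  refine ⟨fun δ => sInf (S δ) + δ, ?_, ?_⟩
  · simpa using hS_tendsto.add (tendsto_nhdsWithin_of_tendsto_nhds tendsto_id)
  · filter_upwards [hS_mem 1 one_pos, self_mem_nhdsWithin] with δ hδ₁ (hδ : 0 < δ)
    obtain ⟨ε, ⟨hε, hPε⟩, hlt⟩ :=
      exists_lt_of_csInf_lt ⟨1, hδ₁⟩ (lt_add_of_pos_right (sInf (S δ)) hδ)
    exact ⟨add_nonneg (hS_nonneg δ) hδ.le, hmono δ ε _ hε hlt.le hPε⟩

section LocalMinimax

variable {d₁ d₂ : ℕ} {f : EuclideanSpace ℝ (Fin d₁) → EuclideanSpace ℝ (Fin d₂) → ℝ}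
  {xs : EuclideanSpace ℝ (Fin d₁)} {ys : EuclideanSpace ℝ (Fin d₂)}

theorem IsLocalMinimax.isLocalMax (h : IsLocalMinimax f xs ys) : IsLocalMax (f xs) ys := by
  obtain ⟨δ₀, hδ₀, _, -, -, hminimax⟩ := h
  filter_upwards [closedBall_mem_nhds ys hδ₀] with y hy
  exact (hminimax δ₀ ⟨hδ₀, le_rfl⟩ xs y (by simp [hδ₀.le]) (mem_closedBall_iff_norm.1 hy)).1

theorem IsLocalMinimax.exists_isLocalMin_ballSup (hf : ∀ x, Continuous (f x))
    (h : IsLocalMinimax f xs ys) :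
    ∃ ε₀ > (0 : ℝ), ∀ ε ∈ Ioc (0 : ℝ) ε₀, IsLocalMin (ballSup f ys ε) xs := by
  obtain ⟨δ₀, hδ₀, h, h_nonneg, h_tendsto, hminimax⟩ := h
  refine ⟨δ₀, hδ₀, fun ε hε => ?_⟩
  have hxs : ballSup f ys ε xs = f xs ys := by
    refine ballSup_eq_of_forall_le hε.1.le fun y hy => ?_
    exact (hminimax δ₀ ⟨hδ₀, le_rfl⟩ xs y (by simp [hδ₀.le])
      ((mem_closedBall_iff_norm.1 hy).trans hε.2)).1
  obtain ⟨δ, hδε, hδ⟩ :=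
    ((h_tendsto.eventually_lt_const hε.1).and (Ioc_mem_nhdsGT hδ₀)).exists
  filter_upwards [closedBall_mem_nhds xs hδ.1] with x hx
  calc ballSup f ys ε xs = f xs ys := hxs
    _ ≤ ballSup f ys (h δ) x :=
      (hminimax δ hδ x ys (mem_closedBall_iff_norm.1 hx) (by simp [hδ.1.le])).2
    _ ≤ ballSup f ys ε x := ballSup_mono (hf x) (h_nonneg δ hδ) hδε.le

theorem isLocalMinimax_of_isLocalMin_ballSup (hf : ∀ x, Continuous (f x))
    (hmax : IsLocalMax (f xs) ys) {ε₀ : ℝ} (hε₀ : 0 < ε₀)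
    (hmin : ∀ ε ∈ Ioc (0 : ℝ) ε₀, IsLocalMin (ballSup f ys ε) xs) :
    IsLocalMinimax f xs ys := by
  set P : ℝ → ℝ → Prop := fun δ ε => ∀ x, ‖x - xs‖ ≤ δ → f xs ys ≤ ballSup f ys ε x
  have hP : ∀ ε > 0, ∃ ρ > 0, P ρ ε := by
    intro ε hε
    have hε' : min ε ε₀ ∈ Ioc 0 ε₀ := ⟨lt_min hε hε₀, min_le_right _ _⟩
    obtain ⟨ρ, hρ, hball⟩ := Metric.eventually_nhds_iff_ball.1 (hmin _ hε')
    refine ⟨ρ / 2, half_pos hρ, fun x hx => ?_⟩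
    calc f xs ys ≤ ballSup f ys (min ε ε₀) xs := le_ballSup (hf xs) hε'.1.le
      _ ≤ ballSup f ys (min ε ε₀) x :=
        hball x (mem_ball_iff_norm.2 (hx.trans_lt (half_lt_self hρ)))
      _ ≤ ballSup f ys ε x := ballSup_mono (hf x) hε'.1.le (min_le_left _ _)
  obtain ⟨h, h_tendsto, hP_h⟩ := exists_tendsto_zero_eventually
    (fun δ ε ε' hε hεε' hPε x hx => (hPε x hx).trans (ballSup_mono (hf x) hε.le hεε'))
    (fun δ δ' ε hδ hPδ x hx => hPδ x (hx.trans hδ)) hP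
  obtain ⟨r, hr, hmax_r⟩ := Metric.eventually_nhds_iff_ball.1 hmax
  obtain ⟨δ₀, hδ₀, hδ₀_sub⟩ := mem_nhdsGT_iff_exists_Ioc_subset.1
    (hP_h.and (Ioo_mem_nhdsGT hr))
  refine ⟨δ₀, hδ₀, h, fun δ hδ => (hδ₀_sub hδ).1.1, h_tendsto, fun δ hδ x y hx hy => ?_⟩
  obtain ⟨⟨-, hPδ⟩, -, hδr⟩ := hδ₀_sub hδ
  exact ⟨hmax_r y (mem_ball_iff_norm.2 (hy.trans_lt hδr)), hPδ x hx⟩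

end LocalMinimax

/-- For continuous `f`, `(xs, ys)` is a local minimax point iff `ys` is a local
maximum of `f xs ·` and there is `ε₀ > 0` such that for every `ε ∈ (0, ε₀]`,
`xs` is a local minimum of `g_ε (x) := max_{‖y - ys‖ ≤ ε} f x y`. -/
theorem stmt_5 {d₁ d₂ : ℕ}
    (f : EuclideanSpace ℝ (Fin d₁) → EuclideanSpace ℝ (Fin d₂) → ℝ)
    (hf : Continuous
      (fun p : EuclideanSpace ℝ (Fin d₁) × EuclideanSpace ℝ (Fin d₂) => f p.1 p.2))
    (xs : EuclideanSpace ℝ (Fin d₁)) (ys : EuclideanSpace ℝ (Fin d₂)) :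
    IsLocalMinimax f xs ys ↔
      (IsLocalMax (f xs) ys ∧
        ∃ ε₀ > (0 : ℝ), ∀ ε ∈ Set.Ioc (0 : ℝ) ε₀,
          IsLocalMin (fun x => sSup (f x '' closedBall ys ε)) xs) := by
  have hf_section : ∀ x, Continuous (f x) := fun x => hf.comp (Continuous.prodMk_right x)
  refine ⟨fun h => ⟨h.isLocalMax, h.exists_isLocalMin_ballSup hf_section⟩, ?_⟩
  rintro ⟨hmax, ε₀, hε₀, hmin⟩
  exact isLocalMinimax_of_isLocalMin_ballSup hf_section hmax hε₀ hmin
end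
end

section
/- For any function f: ℝ^{d₁} × ℝ^{d₂} → ℝ, every local Nash equilibrium of f is a local minimax point of f. -/
open Metric Filter Set

noncomputable section

/-- Every local Nash equilibrium of any function `f` is a local minimax point. -/
theorem stmt_6 {d₁ d₂ : ℕ}
    (f : EuclideanSpace ℝ (Fin d₁) → EuclideanSpace ℝ (Fin d₂) → ℝ)
    (xs : EuclideanSpace ℝ (Fin d₁)) (ys : EuclideanSpace ℝ (Fin d₂))
    (hnash : ∃ δ > (0 : ℝ), ∀ x y, ‖x - xs‖ ≤ δ → ‖y - ys‖ ≤ δ →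
      f xs y ≤ f xs ys ∧ f xs ys ≤ f x ys) :
    IsLocalMinimax f xs ys := by
  obtain ⟨δ, hδ, hN⟩ := hnash
  refine ⟨δ, hδ, fun _ => 0, fun _ _ => le_refl 0, tendsto_const_nhds, ?_⟩
  intro d hd x y hx hy
  obtain ⟨h1, h2⟩ := hN x y (hx.trans hd.2) (hy.trans hd.2)
  refine ⟨h1, ?_⟩
  have : closedBall ys (0:ℝ) = {ys} := closedBall_zero
  rw [this, Set.image_singleton, csSup_singleton]
  exact h2
end
end

section
/- If f: ℝ^{d₁} × ℝ^{d₂} → ℝ is continuously differentiable and (x*,y*) is a local minimax point of f, then ∇_x f(x*,y*) = 0 and ∇_y f(x*,y*) = 0. -/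
/-!
The `y`-condition of a local minimax point makes `ys` a local maximum of `f xs`, so the
`y`-gradient vanishes. For the `x`-gradient, strict differentiability (which `C¹` gives) makes
the expansion `f x y = f xs y + ∂ₓf (xs, ys) (x - xs) + o(‖x - xs‖)` uniform in `y` near `ys`.
If `∂ₓf (xs, ys) ≠ 0`, moving `x` a distance `δ` along a descent direction therefore gives
`f x y ≤ f xs y - c δ ≤ f xs ys - c δ` for all `y` near `ys`, whereas the `x`-condition demands
`f xs ys ≤ sup { f x y | ‖y - ys‖ ≤ h δ }` with `h δ → 0`.
-/

open Metric Filter Set Asymptotics Topology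

noncomputable section

section Descent

variable {E F G : Type*} [NormedAddCommGroup E] [NormedSpace ℝ E]
  [NormedAddCommGroup F] [NormedSpace ℝ F] [NormedAddCommGroup G] [NormedSpace ℝ G]

theorem HasStrictFDerivAt.isLittleO_sub_apply_fst {φ : E × F → G} {D : E × F →L[ℝ] G}
    {a : E} {b : F} (hφ : HasStrictFDerivAt φ D (a, b)) :
    (fun p : E × F => φ p - φ (a, p.2) - D (p.1 - a, 0)) =o[𝓝 (a, b)] fun p => p.1 - a := by
  have hpair : Tendsto (fun p : E × F => (p, (a, p.2))) (𝓝 (a, b)) (𝓝 ((a, b), (a, b))) :=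
    tendsto_id.prodMk_nhds (tendsto_const_nhds.prodMk_nhds (continuous_snd.tendsto _))
  have hdiff (p : E × F) : p - (a, p.2) = (p.1 - a, 0) := Prod.ext rfl (sub_self _)
  have h := hφ.isLittleO.comp_tendsto hpair
  rw [← isLittleO_norm_right] at h ⊢
  exact h.congr (fun _ => by simp only [Function.comp_apply, hdiff]) fun _ => by simp [hdiff]

theorem ContinuousLinearMap.exists_norm_eq_one_apply_neg {L : E →L[ℝ] ℝ} (hL : L ≠ 0) :
    ∃ u, ‖u‖ = 1 ∧ L u < 0 := by
  obtain ⟨v, hv⟩ : ∃ v, L v ≠ 0 := by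
    by_contra! h
    exact hL (ContinuousLinearMap.ext h)
  have hv0 : v ≠ 0 := by rintro rfl; simp at hv
  rcases hv.lt_or_gt with hneg | hpos
  · exact ⟨(‖v‖⁻¹ : ℝ) • v, norm_smul_inv_norm hv0, by
      rw [map_smul, smul_eq_mul]; exact mul_neg_of_pos_of_neg (by positivity) hneg⟩
  · refine ⟨(-‖v‖⁻¹ : ℝ) • v, by rw [neg_smul, norm_neg]; exact norm_smul_inv_norm hv0, ?_⟩
    rw [map_smul, smul_eq_mul]
    exact mul_neg_of_neg_of_pos (by simpa using hv0) hpos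

theorem HasStrictFDerivAt.exists_uniform_descent {f : E → F → ℝ} {D : E × F →L[ℝ] ℝ}
    {a : E} {b : F} (hf : HasStrictFDerivAt (fun p : E × F => f p.1 p.2) D (a, b))
    (hD : D.comp (.inl ℝ E F) ≠ 0) :
    ∃ c > 0, ∃ r > 0, ∀ δ ∈ Ioo 0 r, ∃ x, ‖x - a‖ = δ ∧ ∀ y ∈ ball b r, f x y ≤ f a y - c * δ := by
  obtain ⟨u, hu, hDu⟩ := ContinuousLinearMap.exists_norm_eq_one_apply_neg hD
  have hc : 0 < -D (u, 0) / 2 := by simpa using hDu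
  obtain ⟨r, hr, hsmall⟩ := eventually_nhds_iff_ball.1 (hf.isLittleO_sub_apply_fst.bound hc)
  refine ⟨_, hc, r, hr, fun δ hδ => ⟨a + δ • u, by simp [norm_smul, hu, hδ.1.le], fun y hy => ?_⟩⟩
  have hxy : (a + δ • u, y) ∈ ball (a, b) r := by
    simpa [Prod.dist_eq, dist_eq_norm, norm_smul, hu, _root_.abs_of_pos hδ.1, hδ.2] using hy
  have hstep := hsmall _ hxy
  simp only [add_sub_cancel_left, norm_smul, hu, Real.norm_eq_abs, _root_.abs_of_pos hδ.1,
    mul_one] at hstep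
  have hlin : D (δ • u, 0) = δ * D (u, 0) := by
    rw [← smul_eq_mul, ← map_smul, Prod.smul_mk, smul_zero]
  rw [hlin] at hstep
  linarith [(abs_le.1 hstep).2]

end Descent

namespace IsLocalMinimax

variable {d₁ d₂ : ℕ} {f : EuclideanSpace ℝ (Fin d₁) → EuclideanSpace ℝ (Fin d₂) → ℝ}
  {xs : EuclideanSpace ℝ (Fin d₁)} {ys : EuclideanSpace ℝ (Fin d₂)}

theorem isLocalMax_s7 (hmm : IsLocalMinimax f xs ys) : IsLocalMax (f xs) ys := by
  obtain ⟨δ₀, hδ₀, _, _, _, hmain⟩ := hmm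
  filter_upwards [closedBall_mem_nhds ys hδ₀] with y hy
  exact (hmain δ₀ ⟨hδ₀, le_rfl⟩ xs y (by simp [hδ₀.le]) (mem_closedBall_iff_norm.1 hy)).1

theorem exists_response_radius (hmm : IsLocalMinimax f xs ys) {r : ℝ} (hr : 0 < r) :
    ∃ δ ∈ Ioo 0 r, ∃ ρ ∈ Ico 0 r,
      ∀ x, ‖x - xs‖ ≤ δ → f xs ys ≤ sSup (f x '' closedBall ys ρ) := by
  obtain ⟨δ₀, hδ₀, h, hh0, htend, hmain⟩ := hmm
  obtain ⟨δ, hhδ, hδ⟩ :=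
    ((htend.eventually (gt_mem_nhds hr)).and (Ioo_mem_nhdsGT (lt_min hr hδ₀))).exists
  have hδ₀' : δ ∈ Ioc 0 δ₀ := ⟨hδ.1, hδ.2.le.trans (min_le_right _ _)⟩
  exact ⟨δ, ⟨hδ.1, hδ.2.trans_le (min_le_left _ _)⟩, h δ, ⟨hh0 δ hδ₀', hhδ⟩,
    fun x hx => (hmain δ hδ₀' x ys hx (by simp [hδ.1.le])).2⟩

theorem fderiv_fst_eq_zero (hmm : IsLocalMinimax f xs ys)
    {D : EuclideanSpace ℝ (Fin d₁) × EuclideanSpace ℝ (Fin d₂) →L[ℝ] ℝ}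
    (hf : HasStrictFDerivAt (fun p => f p.1 p.2) D (xs, ys)) :
    fderiv ℝ (fun x => f x ys) xs = 0 := by
  have hpartial : HasFDerivAt (fun x => f x ys) (D.comp (.inl ℝ _ _)) xs :=
    (hf.hasFDerivAt.comp xs (hasFDerivAt_prodMk_left (𝕜 := ℝ) xs ys) :)
  rw [hpartial.fderiv]
  by_contra hD
  obtain ⟨c, hc, r, hr, hdescent⟩ := hf.exists_uniform_descent hD
  obtain ⟨r', hr', hmax⟩ := eventually_nhds_iff_ball.1 hmm.isLocalMax_s7
  obtain ⟨δ, hδ, ρ, hρ, hresp⟩ := hmm.exists_response_radius (lt_min hr hr')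
  obtain ⟨x, hx, hdesc⟩ := hdescent δ ⟨hδ.1, hδ.2.trans_le (min_le_left _ _)⟩
  have hball : closedBall ys ρ ⊆ ball ys (min r r') := closedBall_subset_ball hρ.2
  have hsup : sSup (f x '' closedBall ys ρ) ≤ f xs ys - c * δ := by
    refine csSup_le ((nonempty_closedBall.2 hρ.1).image _) (forall_mem_image.2 fun y hy => ?_)
    have hy' := hball hy
    linarith [hdesc y (ball_subset_ball (min_le_left _ _) hy'),
      hmax y (ball_subset_ball (min_le_right _ _) hy')]
  linarith [hresp x hx.le, mul_pos hc hδ.1]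

end IsLocalMinimax

/-- First-order necessary condition for local minimax points: at a local
minimax point of a continuously differentiable `f`, both partial gradients
vanish. -/
theorem stmt_7 {d₁ d₂ : ℕ}
    (f : EuclideanSpace ℝ (Fin d₁) → EuclideanSpace ℝ (Fin d₂) → ℝ)
    (hf : ContDiff ℝ 1
      (fun p : EuclideanSpace ℝ (Fin d₁) × EuclideanSpace ℝ (Fin d₂) => f p.1 p.2))
    (xs : EuclideanSpace ℝ (Fin d₁)) (ys : EuclideanSpace ℝ (Fin d₂))
    (hmm : IsLocalMinimax f xs ys) :
    gradient (fun x => f x ys) xs = 0 ∧ gradient (f xs) ys = 0 := by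
  constructor
  · rw [gradient, hmm.fderiv_fst_eq_zero (hf.contDiffAt.hasStrictFDerivAt one_ne_zero), map_zero]
  · rw [gradient, hmm.isLocalMax_s7.fderiv_eq_zero, map_zero]
end
end

section
/- Let f: ℝ^{d₁} × ℝ^{d₂} → ℝ be twice continuously differentiable and let (x*,y*) be a stationary point of f (i.e., ∇f(x*,y*) = 0). If ∇²_{yy} f(x*,y*) is negative definite and the Schur complement [∇²_{xx} f − ∇²_{xy} f (∇²_{yy} f)^{-1} ∇²_{yx} f](x*,y*) is positive definite, then (x*,y*) is a local minimax point of f. -/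
open Metric Filter Set Matrix

noncomputable section

/-- The partial Hessian matrix `∇²_{xx} f (xs, ys)`. -/
def hessXX {d₁ d₂ : ℕ}
    (f : EuclideanSpace ℝ (Fin d₁) → EuclideanSpace ℝ (Fin d₂) → ℝ)
    (xs : EuclideanSpace ℝ (Fin d₁)) (ys : EuclideanSpace ℝ (Fin d₂)) :
    Matrix (Fin d₁) (Fin d₁) ℝ :=
  Matrix.of fun i j =>
    fderiv ℝ (fun x => fderiv ℝ (fun x' => f x' ys) x) xs
      (EuclideanSpace.single i 1) (EuclideanSpace.single j 1)

/-- The partial Hessian matrix `∇²_{yy} f (xs, ys)`. -/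
def hessYY {d₁ d₂ : ℕ}
    (f : EuclideanSpace ℝ (Fin d₁) → EuclideanSpace ℝ (Fin d₂) → ℝ)
    (xs : EuclideanSpace ℝ (Fin d₁)) (ys : EuclideanSpace ℝ (Fin d₂)) :
    Matrix (Fin d₂) (Fin d₂) ℝ :=
  Matrix.of fun i j =>
    fderiv ℝ (fun y => fderiv ℝ (f xs) y) ys
      (EuclideanSpace.single i 1) (EuclideanSpace.single j 1)

/-- The mixed partial Hessian matrix `∇²_{xy} f (xs, ys)` (so that
`∇²_{yx} f = (∇²_{xy} f)ᵀ`). -/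
def hessXY {d₁ d₂ : ℕ}
    (f : EuclideanSpace ℝ (Fin d₁) → EuclideanSpace ℝ (Fin d₂) → ℝ)
    (xs : EuclideanSpace ℝ (Fin d₁)) (ys : EuclideanSpace ℝ (Fin d₂)) :
    Matrix (Fin d₁) (Fin d₂) ℝ :=
  Matrix.of fun i j =>
    fderiv ℝ (fun x => fderiv ℝ (f x) ys) xs
      (EuclideanSpace.single i 1) (EuclideanSpace.single j 1)

/-! By the second-derivative test, `f xs` has a local maximum at `ys`. Along the graph of the
linearised best response `y = ys + L (x - xs)`, `L = -(∇²_{yy} f)⁻¹ ∇²_{yx} f`, the Hessian of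
`x ↦ f x (ys + L (x - xs))` at `xs` is the Schur complement, so the same test gives a local
minimum at `xs`. For `‖x - xs‖ ≤ δ` the response lies within `‖L‖ δ` of `ys`, which yields the
local minimax inequality with `h δ = ‖L‖ δ`. -/

theorem le_of_hasDerivAt_two_nonneg {ψ ψ' ψ'' : ℝ → ℝ}
    (hψ : ∀ t, HasDerivAt ψ (ψ' t) t) (hψ' : ∀ t, HasDerivAt ψ' (ψ'' t) t)
    (h₀ : ψ' 0 = 0) (hψ'' : ∀ t ∈ Icc (0 : ℝ) 1, 0 ≤ ψ'' t) : ψ 0 ≤ ψ 1 := by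
  have hmono' : MonotoneOn ψ' (Icc 0 1) :=
    monotoneOn_of_hasDerivWithinAt_nonneg (convex_Icc 0 1)
      (fun t _ => (hψ' t).continuousAt.continuousWithinAt)
      (fun t _ => (hψ' t).hasDerivWithinAt)
      (fun t ht => hψ'' t (interior_subset ht))
  have hmono : MonotoneOn ψ (Icc 0 1) :=
    monotoneOn_of_hasDerivWithinAt_nonneg (convex_Icc 0 1)
      (fun t _ => (hψ t).continuousAt.continuousWithinAt)
      (fun t _ => (hψ t).hasDerivWithinAt)
      (fun t ht => h₀ ▸ hmono' (left_mem_Icc.2 zero_le_one) (interior_subset ht)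
        (interior_subset ht).1)
  exact hmono (left_mem_Icc.2 zero_le_one) (right_mem_Icc.2 zero_le_one) zero_le_one

section SecondDerivativeTest

variable {E : Type*} [NormedAddCommGroup E] [NormedSpace ℝ E]

theorem isCoercive_of_apply_self_pos [FiniteDimensional ℝ E] {Q : E →L[ℝ] E →L[ℝ] ℝ}
    (hQ : ∀ v ≠ 0, 0 < Q v v) : IsCoercive Q := by
  rcases subsingleton_or_nontrivial E with hE | hE
  · exact ⟨1, one_pos, fun u => by simp [Subsingleton.elim u 0]⟩
  obtain ⟨u, hu, hmin⟩ := (isCompact_sphere (0 : E) 1).exists_isMinOn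
    (NormedSpace.sphere_nonempty.2 zero_le_one)
    (Q.continuous.clm_apply continuous_id).continuousOn
  refine ⟨Q u u, hQ u (ne_zero_of_mem_unit_sphere ⟨u, hu⟩), fun v => ?_⟩
  rcases eq_or_ne v 0 with rfl | hv
  · simp
  have hv' : ‖v‖ ≠ 0 := norm_ne_zero_iff.2 hv
  have hmem : ‖v‖⁻¹ • v ∈ sphere (0 : E) 1 := by
    simp [norm_smul, inv_mul_cancel₀ hv']
  have hle : Q u u ≤ Q (‖v‖⁻¹ • v) (‖v‖⁻¹ • v) := hmin hmem
  simp only [map_smul, _root_.smul_apply, smul_eq_mul] at hle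
  calc Q u u * ‖v‖ * ‖v‖ ≤ (‖v‖⁻¹ * (‖v‖⁻¹ * Q v v)) * ‖v‖ * ‖v‖ := by gcongr
    _ = Q v v := by field_simp

theorem apply_self_nonneg_of_norm_sub_le {Q Q' : E →L[ℝ] E →L[ℝ] ℝ} {c : ℝ}
    (hQ : ∀ v, c * ‖v‖ * ‖v‖ ≤ Q v v) (hQ' : ‖Q' - Q‖ ≤ c) (v : E) : 0 ≤ Q' v v := by
  have : |(Q' - Q) v v| ≤ c * ‖v‖ * ‖v‖ :=
    ((Q' - Q).le_opNorm₂ v v).trans (by gcongr)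
  simp only [_root_.sub_apply] at this
  linarith [(abs_le.1 this).1, hQ v]

theorem isLocalMin_of_fderiv_eq_zero_of_fderiv_fderiv_pos [FiniteDimensional ℝ E] {g : E → ℝ}
    {a : E} (hg : ContDiff ℝ 2 g) (h₁ : fderiv ℝ g a = 0)
    (h₂ : ∀ v ≠ 0, 0 < fderiv ℝ (fderiv ℝ g) a v v) : IsLocalMin g a := by
  obtain ⟨c, hc, hcoer⟩ := isCoercive_of_apply_self_pos h₂
  have hg' : ContDiff ℝ 1 (fderiv ℝ g) := hg.fderiv_right le_rfl
  obtain ⟨r, hr, hnear⟩ := Metric.continuousAt_iff.1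
    ((hg'.continuous_fderiv one_ne_zero).continuousAt (x := a)) c hc
  filter_upwards [ball_mem_nhds a hr] with x hx
  have hline : ∀ t : ℝ, HasDerivAt (fun s : ℝ => a + s • (x - a)) (x - a) t := fun t => by
    simpa using ((hasDerivAt_id t).smul_const (x - a)).const_add a
  have hsegment := le_of_hasDerivAt_two_nonneg (ψ := fun t => g (a + t • (x - a)))
    (fun t => (hg.differentiable two_ne_zero _).hasFDerivAt.comp_hasDerivAt t (hline t))
    (fun t => by
      simpa using ((hg'.differentiable one_ne_zero _).hasFDerivAt.comp_hasDerivAt t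
        (hline t)).clm_apply (hasDerivAt_const t (x - a)))
    (by simp [h₁])
    (fun t ht => apply_self_nonneg_of_norm_sub_le hcoer
      (by simpa [dist_eq_norm] using
        (hnear ((convex_ball a r).add_smul_sub_mem (mem_ball_self hr) hx ht)).le)
      (x - a))
  simpa using hsegment

theorem isLocalMax_of_fderiv_eq_zero_of_fderiv_fderiv_neg [FiniteDimensional ℝ E] {g : E → ℝ}
    {a : E} (hg : ContDiff ℝ 2 g) (h₁ : fderiv ℝ g a = 0)
    (h₂ : ∀ v ≠ 0, fderiv ℝ (fderiv ℝ g) a v v < 0) : IsLocalMax g a := by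
  have hneg : fderiv ℝ (fun y => -g y) = fun y => -fderiv ℝ g y := funext fun _ => fderiv_fun_neg
  simpa using (isLocalMin_of_fderiv_eq_zero_of_fderiv_fderiv_pos (a := a) hg.neg
    (by simp [h₁]) fun v hv => by simpa [hneg, fderiv_fun_neg] using h₂ v hv).neg

end SecondDerivativeTest

section ChainRule

variable {E E' E'' : Type*} [NormedAddCommGroup E] [NormedSpace ℝ E]
  [NormedAddCommGroup E'] [NormedSpace ℝ E'] [NormedAddCommGroup E''] [NormedSpace ℝ E'']
  {F : E → ℝ}

theorem fderiv_fderiv_comp_apply (hF : ContDiff ℝ 2 F) {p : E' → E} {A : E' →L[ℝ] E} {s : E'}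
    (hp : HasFDerivAt p A s) (J : E'' →L[ℝ] E) (v : E') (w : E'') :
    fderiv ℝ (fun s => (fderiv ℝ F (p s)).comp J) s v w
      = fderiv ℝ (fderiv ℝ F) (p s) (A v) (J w) := by
  have hF' : HasFDerivAt (fderiv ℝ F) (fderiv ℝ (fderiv ℝ F) (p s)) (p s) :=
    ((hF.fderiv_right le_rfl).differentiable one_ne_zero _).hasFDerivAt
  have hcomp : HasFDerivAt (fun s => (fderiv ℝ F (p s)).comp J) _ s :=
    (hF'.comp s hp).clm_comp (hasFDerivAt_const J s)
  rw [hcomp.fderiv]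
  simp

theorem fderiv_fderiv_comp_of_hasFDerivAt (hF : ContDiff ℝ 2 F) {p : E' → E} {A : E' →L[ℝ] E}
    (hp : ∀ s, HasFDerivAt p A s) (s v w : E') :
    fderiv ℝ (fderiv ℝ fun s => F (p s)) s v w = fderiv ℝ (fderiv ℝ F) (p s) (A v) (A w) := by
  have hfd : fderiv ℝ (fun s => F (p s)) = fun s => (fderiv ℝ F (p s)).comp A :=
    funext fun s => ((hF.differentiable two_ne_zero _).hasFDerivAt.comp s (hp s)).fderiv
  rw [hfd, fderiv_fderiv_comp_apply hF (hp s)]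

end ChainRule

section Partial

variable {E₁ E₂ : Type*} [NormedAddCommGroup E₁] [NormedSpace ℝ E₁]
  [NormedAddCommGroup E₂] [NormedSpace ℝ E₂] {f : E₁ → E₂ → ℝ}

theorem fderiv_apply_left_eq (hf : Differentiable ℝ (Function.uncurry f)) (x : E₁) (y : E₂) :
    fderiv ℝ (fun x' => f x' y) x
      = (fderiv ℝ (Function.uncurry f) (x, y)).comp (ContinuousLinearMap.inl ℝ E₁ E₂) :=
  ((hf _).hasFDerivAt.comp x (hasFDerivAt_prodMk_left x y)).fderiv

theorem fderiv_apply_right_eq (hf : Differentiable ℝ (Function.uncurry f)) (x : E₁) (y : E₂) :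
    fderiv ℝ (f x) y
      = (fderiv ℝ (Function.uncurry f) (x, y)).comp (ContinuousLinearMap.inr ℝ E₁ E₂) :=
  ((hf _).hasFDerivAt.comp y (hasFDerivAt_prodMk_right x y)).fderiv

theorem fderiv_fderiv_apply_left (hf : ContDiff ℝ 2 (Function.uncurry f)) (x : E₁) (y : E₂)
    (v w : E₁) :
    fderiv ℝ (fun x => fderiv ℝ (fun x' => f x' y) x) x v w
      = fderiv ℝ (fderiv ℝ (Function.uncurry f)) (x, y) (v, 0) (w, 0) := by
  simp_rw [fderiv_apply_left_eq (hf.differentiable two_ne_zero)]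
  exact fderiv_fderiv_comp_apply hf (hasFDerivAt_prodMk_left x y) _ v w

theorem fderiv_fderiv_apply_right (hf : ContDiff ℝ 2 (Function.uncurry f)) (x : E₁) (y : E₂)
    (v w : E₂) :
    fderiv ℝ (fun y => fderiv ℝ (f x) y) y v w
      = fderiv ℝ (fderiv ℝ (Function.uncurry f)) (x, y) (0, v) (0, w) := by
  simp_rw [fderiv_apply_right_eq (hf.differentiable two_ne_zero)]
  exact fderiv_fderiv_comp_apply hf (hasFDerivAt_prodMk_right x y) _ v w

theorem fderiv_fderiv_apply_left_right (hf : ContDiff ℝ 2 (Function.uncurry f)) (x : E₁) (y : E₂)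
    (v : E₁) (w : E₂) :
    fderiv ℝ (fun x => fderiv ℝ (f x) y) x v w
      = fderiv ℝ (fderiv ℝ (Function.uncurry f)) (x, y) (v, 0) (0, w) := by
  simp_rw [fderiv_apply_right_eq (hf.differentiable two_ne_zero)]
  exact fderiv_fderiv_comp_apply hf (hasFDerivAt_prodMk_left x y) _ v w

end Partial

theorem apply_apply_eq_dotProduct_mulVec {ι κ : Type*} [Fintype ι] [DecidableEq ι] [Fintype κ]
    [DecidableEq κ] (T : EuclideanSpace ℝ ι →L[ℝ] EuclideanSpace ℝ κ →L[ℝ] ℝ)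
    (v : EuclideanSpace ℝ ι) (w : EuclideanSpace ℝ κ) :
    T v w = v ⬝ᵥ (Matrix.of fun i j => T (EuclideanSpace.single i 1) (EuclideanSpace.single j 1))
      *ᵥ w := by
  conv_lhs => rw [← (EuclideanSpace.basisFun ι ℝ).sum_repr v,
    ← (EuclideanSpace.basisFun κ ℝ).sum_repr w]
  simp only [map_sum, map_smul, _root_.sum_apply, _root_.smul_apply, smul_eq_mul]
  simp only [EuclideanSpace.basisFun_repr, EuclideanSpace.basisFun_apply, dotProduct, mulVec,
    of_apply, Finset.mul_sum]
  rw [Finset.sum_comm]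
  exact Finset.sum_congr rfl fun _ _ => Finset.sum_congr rfl fun _ _ => by ring

theorem Matrix.dotProduct_sub_mul_inv_mul_transpose_mulVec {m n α : Type*} [Fintype m]
    [Fintype n] [DecidableEq m] [CommRing α] (P : Matrix n n α) (Q : Matrix n m α)
    {R : Matrix m m α} (hR : IsUnit R.det) (v : n → α) {u : m → α} (hu : R *ᵥ u = -(Qᵀ *ᵥ v)) :
    v ⬝ᵥ (P - Q * R⁻¹ * Qᵀ) *ᵥ v = v ⬝ᵥ P *ᵥ v + 2 * (v ⬝ᵥ Q *ᵥ u) + u ⬝ᵥ R *ᵥ u := by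
  have hu' : u = -((R⁻¹ * Qᵀ) *ᵥ v) := by
    rw [← mulVec_mulVec, ← mulVec_neg, ← hu, mulVec_mulVec, nonsing_inv_mul _ hR, one_mulVec]
  have hRu : u ⬝ᵥ R *ᵥ u = -(v ⬝ᵥ Q *ᵥ u) := by
    rw [hu, dotProduct_neg, dotProduct_mulVec, vecMul_transpose, dotProduct_comm]
  have hQu : v ⬝ᵥ Q *ᵥ u = -(v ⬝ᵥ (Q * R⁻¹ * Qᵀ) *ᵥ v) := by
    rw [hu', mulVec_neg, dotProduct_neg, mulVec_mulVec, Matrix.mul_assoc]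
  rw [sub_mulVec, dotProduct_sub, hRu, hQu]
  ring

theorem isLocalMinimax_of_isLocalMax_of_isLocalMin {d₁ d₂ : ℕ}
    {f : EuclideanSpace ℝ (Fin d₁) → EuclideanSpace ℝ (Fin d₂) → ℝ}
    {xs : EuclideanSpace ℝ (Fin d₁)} {ys : EuclideanSpace ℝ (Fin d₂)}
    (hcont : ∀ x, Continuous (f x)) (hmax : IsLocalMax (f xs) ys)
    (L : EuclideanSpace ℝ (Fin d₁) →L[ℝ] EuclideanSpace ℝ (Fin d₂))
    (hmin : IsLocalMin (fun x => f x (ys + L (x - xs))) xs) :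
    IsLocalMinimax f xs ys := by
  obtain ⟨r₁, hr₁, hmax⟩ := nhds_basis_closedBall.eventually_iff.1 hmax
  obtain ⟨r₂, hr₂, hmin⟩ := nhds_basis_closedBall.eventually_iff.1 hmin
  refine ⟨min r₁ r₂, lt_min hr₁ hr₂, fun δ => ‖L‖ * δ,
    fun δ hδ => mul_nonneg (norm_nonneg L) hδ.1.le,
    ((continuous_const.mul continuous_id).tendsto' 0 0 (by simp)).mono_left nhdsWithin_le_nhds,
    fun δ hδ x y hx hy => ⟨hmax ?_, ?_⟩⟩
  · rw [mem_closedBall, dist_eq_norm]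
    exact hy.trans (hδ.2.trans (min_le_left _ _))
  have hmem : ys + L (x - xs) ∈ closedBall ys (‖L‖ * δ) := by
    rw [mem_closedBall, dist_eq_norm, add_sub_cancel_left]
    exact (L.le_opNorm _).trans (by gcongr)
  calc f xs ys ≤ f x (ys + L (x - xs)) := by
        simpa using hmin (x := x) (by
          rw [mem_closedBall, dist_eq_norm]
          exact hx.trans (hδ.2.trans (min_le_right _ _)))
    _ ≤ sSup (f x '' closedBall ys (‖L‖ * δ)) :=
        le_csSup ((isCompact_closedBall _ _).image (hcont x)).bddAbove ⟨_, hmem, rfl⟩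

section Hessian

variable {d₁ d₂ : ℕ} {f : EuclideanSpace ℝ (Fin d₁) → EuclideanSpace ℝ (Fin d₂) → ℝ}

theorem fderiv_fderiv_uncurry_apply_self (hf : ContDiff ℝ 2 (Function.uncurry f))
    (xs : EuclideanSpace ℝ (Fin d₁)) (ys : EuclideanSpace ℝ (Fin d₂))
    (v : EuclideanSpace ℝ (Fin d₁)) (u : EuclideanSpace ℝ (Fin d₂)) :
    fderiv ℝ (fderiv ℝ (Function.uncurry f)) (xs, ys) (v, u) (v, u)
      = v ⬝ᵥ hessXX f xs ys *ᵥ v + 2 * (v ⬝ᵥ hessXY f xs ys *ᵥ u)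
        + u ⬝ᵥ hessYY f xs ys *ᵥ u := by
  set B := fderiv ℝ (fderiv ℝ (Function.uncurry f)) (xs, ys)
  have hsymm : B (0, u) (v, 0) = B (v, 0) (0, u) :=
    (hf.contDiffAt.isSymmSndFDerivAt (by simp)) _ _
  have hsplit : ((v, u) : EuclideanSpace ℝ (Fin d₁) × EuclideanSpace ℝ (Fin d₂))
      = (v, 0) + (0, u) := by simp
  rw [hessXX, hessXY, hessYY, ← apply_apply_eq_dotProduct_mulVec,
    ← apply_apply_eq_dotProduct_mulVec, ← apply_apply_eq_dotProduct_mulVec,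
    fderiv_fderiv_apply_left hf, fderiv_fderiv_apply_left_right hf, fderiv_fderiv_apply_right hf,
    hsplit]
  simp only [map_add, _root_.add_apply, hsymm]
  ring

theorem isLocalMax_apply_of_negDef_hessYY (hf : ContDiff ℝ 2 (Function.uncurry f))
    {xs : EuclideanSpace ℝ (Fin d₁)} {ys : EuclideanSpace ℝ (Fin d₂)}
    (hstat : fderiv ℝ (Function.uncurry f) (xs, ys) = 0) (hyy : (-(hessYY f xs ys)).PosDef) :
    IsLocalMax (f xs) ys := by
  refine isLocalMax_of_fderiv_eq_zero_of_fderiv_fderiv_neg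
    (hf.comp (contDiff_const.prodMk contDiff_id))
    (by rw [fderiv_apply_right_eq (hf.differentiable two_ne_zero), hstat,
      ContinuousLinearMap.zero_comp]) fun v hv => ?_
  have hpos := hyy.dotProduct_mulVec_pos (x := WithLp.ofLp v) (by simpa using hv)
  rw [neg_mulVec, dotProduct_neg, star_trivial] at hpos
  rw [apply_apply_eq_dotProduct_mulVec]
  exact neg_pos.1 hpos

/-- Derivative at `xs` of the local best response `x ↦ argmax_y f x y`, by the implicit function
theorem applied to `∇_y f = 0`. -/
def bestResponseCLM (f : EuclideanSpace ℝ (Fin d₁) → EuclideanSpace ℝ (Fin d₂) → ℝ)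
    (xs : EuclideanSpace ℝ (Fin d₁)) (ys : EuclideanSpace ℝ (Fin d₂)) :
    EuclideanSpace ℝ (Fin d₁) →L[ℝ] EuclideanSpace ℝ (Fin d₂) :=
  (toEuclideanLin (-((hessYY f xs ys)⁻¹ * (hessXY f xs ys)ᵀ))).toContinuousLinearMap

theorem hessYY_mulVec_bestResponseCLM {xs : EuclideanSpace ℝ (Fin d₁)}
    {ys : EuclideanSpace ℝ (Fin d₂)} (hR : IsUnit (hessYY f xs ys).det)
    (v : EuclideanSpace ℝ (Fin d₁)) :
    hessYY f xs ys *ᵥ bestResponseCLM f xs ys v = -((hessXY f xs ys)ᵀ *ᵥ v) := by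
  change hessYY f xs ys *ᵥ (-((hessYY f xs ys)⁻¹ * (hessXY f xs ys)ᵀ) *ᵥ WithLp.ofLp v) = _
  rw [mulVec_mulVec, Matrix.mul_neg, ← Matrix.mul_assoc, mul_nonsing_inv _ hR, Matrix.one_mul,
    neg_mulVec]

theorem isLocalMin_apply_bestResponseCLM_of_posDef_schur
    (hf : ContDiff ℝ 2 (Function.uncurry f))
    {xs : EuclideanSpace ℝ (Fin d₁)} {ys : EuclideanSpace ℝ (Fin d₂)}
    (hstat : fderiv ℝ (Function.uncurry f) (xs, ys) = 0) (hyy : (-(hessYY f xs ys)).PosDef)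
    (hschur : (hessXX f xs ys -
      hessXY f xs ys * (hessYY f xs ys)⁻¹ * (hessXY f xs ys)ᵀ).PosDef) :
    IsLocalMin (fun x => f x (ys + bestResponseCLM f xs ys (x - xs))) xs := by
  set L := bestResponseCLM f xs ys
  have hR : IsUnit (hessYY f xs ys).det :=
    (isUnit_iff_isUnit_det _).1 (by simpa using hyy.isUnit.neg)
  have hp : ∀ s, HasFDerivAt (fun x => (x, ys + L (x - xs)))
      ((ContinuousLinearMap.id ℝ _).prod L) s :=
    fun s => (hasFDerivAt_id s).prodMk
      (by simpa using (L.hasFDerivAt.comp s ((hasFDerivAt_id s).sub_const xs)).const_add ys)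
  have hpxs : ((xs, ys + L (xs - xs)) : EuclideanSpace ℝ (Fin d₁) × EuclideanSpace ℝ (Fin d₂))
      = (xs, ys) := by simp
  show IsLocalMin (fun x => Function.uncurry f (x, ys + L (x - xs))) xs
  refine isLocalMin_of_fderiv_eq_zero_of_fderiv_fderiv_pos
    (hf.comp (contDiff_id.prodMk
      (contDiff_const.add (L.contDiff.comp (contDiff_id.sub contDiff_const)))))
    (by rw [fderiv_fun_comp _ (hf.differentiable two_ne_zero _) (hp xs).differentiableAt,
      (hp xs).fderiv, hpxs, hstat, ContinuousLinearMap.zero_comp]) fun v hv => ?_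
  rw [fderiv_fderiv_comp_of_hasFDerivAt hf hp, hpxs]
  simp only [ContinuousLinearMap.prod_apply, ContinuousLinearMap.id_apply]
  rw [fderiv_fderiv_uncurry_apply_self hf,
    ← Matrix.dotProduct_sub_mul_inv_mul_transpose_mulVec _ _ hR _
      (hessYY_mulVec_bestResponseCLM hR v)]
  simpa using hschur.dotProduct_mulVec_pos (x := WithLp.ofLp v) (by simpa using hv)

end Hessian

/-- Second-order sufficient condition for local minimax points: a stationary
point of a twice continuously differentiable `f` at which `∇²_{yy} f` is
negative definite and the Schur complement
`∇²_{xx} f - ∇²_{xy} f (∇²_{yy} f)⁻¹ ∇²_{yx} f` is positive definite is a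
local minimax point. -/
theorem stmt_9 {d₁ d₂ : ℕ}
    (f : EuclideanSpace ℝ (Fin d₁) → EuclideanSpace ℝ (Fin d₂) → ℝ)
    (hf : ContDiff ℝ 2
      (fun p : EuclideanSpace ℝ (Fin d₁) × EuclideanSpace ℝ (Fin d₂) => f p.1 p.2))
    (xs : EuclideanSpace ℝ (Fin d₁)) (ys : EuclideanSpace ℝ (Fin d₂))
    (hstat : fderiv ℝ
      (fun p : EuclideanSpace ℝ (Fin d₁) × EuclideanSpace ℝ (Fin d₂) => f p.1 p.2)
      (xs, ys) = 0)
    (hyy : (-(hessYY f xs ys)).PosDef)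
    (hschur : (hessXX f xs ys -
      hessXY f xs ys * (hessYY f xs ys)⁻¹ * (hessXY f xs ys)ᵀ).PosDef) :
    IsLocalMinimax f xs ys :=
  isLocalMinimax_of_isLocalMax_of_isLocalMin
    (fun _ => hf.continuous.comp (continuous_const.prodMk continuous_id))
    (isLocalMax_apply_of_negDef_hessYY hf hstat hyy) _
    (isLocalMin_apply_bestResponseCLM_of_posDef_schur hf hstat hyy hschur)
end
end

section
/- Consider f(x,y) = 0.2·x·y − cos(y) on the domain X × Y = [−1,1] × [−2π, 2π]. The points (0, −π) and (0, π) are global minimax points of f on this domain, yet neither is a stationary point of f (in particular, ∇_x f(0,±π) = ∓0.2π ≠ 0), and hence neither is a local minimax point of f. -/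
open Metric Filter Set

noncomputable section

/-- `(xs, ys)` is a local minimax point of `f` on the domain `X × Y`. -/
def IsLocalMinimaxOn (f : ℝ → ℝ → ℝ) (X Y : Set ℝ) (xs ys : ℝ) : Prop :=
  ∃ δ₀ > (0 : ℝ), ∃ h : ℝ → ℝ,
    (∀ δ ∈ Set.Ioc (0 : ℝ) δ₀, 0 ≤ h δ) ∧
    Tendsto h (nhdsWithin 0 (Set.Ioi 0)) (nhds 0) ∧
    ∀ δ ∈ Set.Ioc (0 : ℝ) δ₀, ∀ x ∈ X, ∀ y ∈ Y,
      ‖x - xs‖ ≤ δ → ‖y - ys‖ ≤ δ →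
        f xs y ≤ f xs ys ∧ f xs ys ≤ sSup (f x '' (Y ∩ closedBall ys (h δ)))

lemma aux_not_lm (s : ℝ) (hs : s = 1 ∨ s = -1) :
    ¬ IsLocalMinimaxOn (fun x y => 0.2 * x * y - Real.cos y)
      (Set.Icc (-1) 1) (Set.Icc (-(2 * Real.pi)) (2 * Real.pi)) 0 (s * Real.pi) := by
  rintro ⟨δ₀, hδ₀, h, hh0, hhtend, hP⟩
  have hπ := Real.pi_pos
  have hπ4 := Real.pi_lt_d2
  -- pick a small δ
  have hev1 : ∀ᶠ δ in nhdsWithin (0:ℝ) (Set.Ioi 0), h δ < Real.pi / 2 :=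
    hhtend.eventually_lt_const (by positivity)
  have hev2 : ∀ᶠ δ in nhdsWithin (0:ℝ) (Set.Ioi 0), δ < min δ₀ 1 :=
    mem_nhdsWithin_of_mem_nhds (Iio_mem_nhds (by positivity))
  have hev3 : ∀ᶠ δ in nhdsWithin (0:ℝ) (Set.Ioi 0), δ ∈ Set.Ioi (0:ℝ) :=
    eventually_mem_nhdsWithin
  obtain ⟨δ, ⟨h1, h2⟩, h3⟩ := ((hev1.and hev2).and hev3).exists
  have hδpos : (0:ℝ) < δ := h3
  have hδ1 : δ < 1 := lt_of_lt_of_le h2 (min_le_right _ _)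
  have hδδ₀ : δ ≤ δ₀ := (lt_of_lt_of_le h2 (min_le_left _ _)).le
  have hmemδ : δ ∈ Set.Ioc (0:ℝ) δ₀ := ⟨hδpos, hδδ₀⟩
  have hhδ0 : 0 ≤ h δ := hh0 δ hmemδ
  have hxmem : -s * δ ∈ Set.Icc (-1:ℝ) 1 := by
    rcases hs with rfl | rfl <;> constructor <;> simp <;> linarith
  have hymem : s * Real.pi ∈ Set.Icc (-(2 * Real.pi)) (2 * Real.pi) := by
    rcases hs with rfl | rfl <;> constructor <;> nlinarith
  have hxn : ‖-s * δ - 0‖ ≤ δ := by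
    rw [Real.norm_eq_abs]
    rcases hs with rfl | rfl <;> simp [abs_of_pos hδpos, abs_of_nonneg hδpos.le]
  have hyn : ‖s * Real.pi - s * Real.pi‖ ≤ δ := by simp; linarith
  have key := (hP δ hmemδ (-s * δ) hxmem (s * Real.pi) hymem hxn hyn).2
  have hcos : Real.cos (s * Real.pi) = -1 := by
    rcases hs with rfl | rfl <;> simp [Real.cos_pi]
  have hf0 : (0.2 : ℝ) * 0 * (s * Real.pi) - Real.cos (s * Real.pi) = 1 := by
    rw [hcos]; ring
  have hbound : sSup ((fun y => 0.2 * (-s * δ) * y - Real.cos y) ''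
      (Set.Icc (-(2 * Real.pi)) (2 * Real.pi) ∩ closedBall (s * Real.pi) (h δ)))
      ≤ 1 - 0.2 * δ * (Real.pi - h δ) := by
    apply Real.sSup_le
    · rintro z ⟨y, ⟨hyY, hyB⟩, rfl⟩
      have hd : |y - s * Real.pi| ≤ h δ := by
        rwa [mem_closedBall, Real.dist_eq] at hyB
      have hsy : Real.pi - h δ ≤ s * y := by
        rw [abs_le] at hd
        rcases hs with rfl | rfl <;> linarith [hd.1, hd.2]
      have hcy := Real.neg_one_le_cos y
      have : 0.2 * (-s * δ) * y = -(0.2 * δ) * (s * y) := by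
        rcases hs with rfl | rfl <;> ring
      nlinarith [mul_le_mul_of_nonneg_left hsy (by positivity : (0:ℝ) ≤ 0.2 * δ)]
    · nlinarith
  have hlt : 1 - 0.2 * δ * (Real.pi - h δ) < 1 := by nlinarith
  simp only at key
  rw [hf0] at key
  linarith [le_trans key hbound]

/-- For `f (x, y) = 0.2 x y - cos y` on `[-1,1] × [-2π, 2π]`, the points
`(0, -π)` and `(0, π)` are global minimax points, yet neither is stationary
(`∇_x f (0, ∓π) = ∓0.2 π ≠ 0`), and neither is a local minimax point. -/
theorem stmt_10
    (f : ℝ → ℝ → ℝ) (hf : f = fun x y => 0.2 * x * y - Real.cos y)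
    (X Y : Set ℝ) (hX : X = Set.Icc (-1) 1)
    (hY : Y = Set.Icc (-(2 * Real.pi)) (2 * Real.pi)) :
    ((∀ y ∈ Y, f 0 y ≤ f 0 (-Real.pi)) ∧
      (∀ x ∈ X, f 0 (-Real.pi) ≤ sSup (f x '' Y))) ∧
    ((∀ y ∈ Y, f 0 y ≤ f 0 Real.pi) ∧
      (∀ x ∈ X, f 0 Real.pi ≤ sSup (f x '' Y))) ∧
    deriv (fun x => f x (-Real.pi)) 0 = -(0.2 * Real.pi) ∧
    deriv (fun x => f x Real.pi) 0 = 0.2 * Real.pi ∧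
    (0.2 * Real.pi ≠ 0) ∧
    ¬ IsLocalMinimaxOn f X Y 0 (-Real.pi) ∧
    ¬ IsLocalMinimaxOn f X Y 0 Real.pi := by
  subst hf hX hY
  have hπ := Real.pi_pos
  have hπ4 := Real.pi_lt_d2
  -- values at (0, ±π)
  have hvm : (fun x y => 0.2 * x * y - Real.cos y) 0 (-Real.pi) = 1 := by
    simp [Real.cos_pi]
  have hvp : (fun x y => 0.2 * x * y - Real.cos y) 0 Real.pi = 1 := by
    simp [Real.cos_pi]
  have hupper : ∀ y ∈ Set.Icc (-(2 * Real.pi)) (2 * Real.pi),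
      (fun x y => 0.2 * x * y - Real.cos y) 0 y ≤ 1 := by
    intro y _
    have := Real.neg_one_le_cos y
    simp only
    nlinarith
  -- bounded above
  have hbdd : ∀ x ∈ Set.Icc (-1:ℝ) 1, BddAbove
      ((fun x y => 0.2 * x * y - Real.cos y) x ''
        (Set.Icc (-(2 * Real.pi)) (2 * Real.pi))) := by
    intro x hx
    refine ⟨2 * Real.pi + 1, ?_⟩
    rintro z ⟨y, hy, rfl⟩
    obtain ⟨hx1, hx2⟩ := hx
    obtain ⟨hy1, hy2⟩ := hy
    have := Real.neg_one_le_cos y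
    simp only
    nlinarith [mul_nonneg (sub_nonneg.mpr hx2) (sub_nonneg.mpr hy2),
      mul_nonneg (sub_nonneg.mpr hx2) (by linarith : (0:ℝ) ≤ y - -(2*Real.pi)),
      mul_nonneg (by linarith : (0:ℝ) ≤ x - -1) (sub_nonneg.mpr hy2),
      mul_nonneg (by linarith : (0:ℝ) ≤ x - -1) (by linarith : (0:ℝ) ≤ y - -(2*Real.pi))]
  -- 1 ≤ sup
  have hsup : ∀ x ∈ Set.Icc (-1:ℝ) 1,
      (1:ℝ) ≤ sSup ((fun x y => 0.2 * x * y - Real.cos y) x ''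
        (Set.Icc (-(2 * Real.pi)) (2 * Real.pi))) := by
    intro x hx
    rcases le_or_gt 0 x with hx0 | hx0
    · have hmem : Real.pi ∈ Set.Icc (-(2 * Real.pi)) (2 * Real.pi) := by
        constructor <;> nlinarith
      have hle := le_csSup (hbdd x hx) (Set.mem_image_of_mem _ hmem)
      have : (1:ℝ) ≤ (fun x y => 0.2 * x * y - Real.cos y) x Real.pi := by
        simp [Real.cos_pi]; nlinarith
      linarith
    · have hmem : -Real.pi ∈ Set.Icc (-(2 * Real.pi)) (2 * Real.pi) := by
        constructor <;> nlinarith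
      have hle := le_csSup (hbdd x hx) (Set.mem_image_of_mem _ hmem)
      have : (1:ℝ) ≤ (fun x y => 0.2 * x * y - Real.cos y) x (-Real.pi) := by
        simp [Real.cos_pi]; nlinarith
      linarith
  refine ⟨⟨fun y hy => by rw [hvm]; exact hupper y hy,
           fun x hx => by rw [hvm]; exact hsup x hx⟩,
          ⟨fun y hy => by rw [hvp]; exact hupper y hy,
           fun x hx => by rw [hvp]; exact hsup x hx⟩, ?_, ?_, ?_, ?_, ?_⟩
  · have hD : HasDerivAt (fun x : ℝ => 0.2 * x * (-Real.pi) - Real.cos (-Real.pi))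
        (0.2 * (-Real.pi)) 0 := by
      simpa using (((hasDerivAt_id (0:ℝ)).const_mul 0.2).mul_const (-Real.pi)).sub_const
        (Real.cos (-Real.pi))
    rw [hD.deriv]; ring
  · have hD : HasDerivAt (fun x : ℝ => 0.2 * x * Real.pi - Real.cos Real.pi)
        (0.2 * Real.pi) 0 := by
      simpa using (((hasDerivAt_id (0:ℝ)).const_mul 0.2).mul_const Real.pi).sub_const
        (Real.cos Real.pi)
    rw [hD.deriv]
  · positivity
  · simpa using aux_not_lm (-1) (Or.inr rfl)
  · simpa using aux_not_lm 1 (Or.inl rfl)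
end
end

section
/- The twice-differentiable function f(x,y) = y² − 2·x·y on the compact domain [−1,1] × [−1,1] has no local minimax point. -/
open Metric Filter Set

noncomputable section

lemma sSup_image_le' {g : ℝ → ℝ} {S : Set ℝ} {B : ℝ} (hne : S.Nonempty)
    (hb : ∀ y ∈ S, g y ≤ B) : sSup (g '' S) ≤ B :=
  csSup_le (hne.image g) (by rintro b ⟨y, hy, rfl⟩; exact hb y hy)

/-- The function `f (x, y) = y² - 2 x y` on the compact domain
`[-1,1] × [-1,1]` has no local minimax point. -/
theorem stmt_11
    (f : ℝ → ℝ → ℝ) (hf : f = fun x y => y ^ 2 - 2 * x * y)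
    (X Y : Set ℝ) (hX : X = Set.Icc (-1) 1) (hY : Y = Set.Icc (-1) 1) :
    ∀ xs ∈ X, ∀ ys ∈ Y, ¬ IsLocalMinimaxOn f X Y xs ys := by
  subst hf hX hY
  rintro xs hxs ys hys ⟨δ₀, hδ₀, h, hnn, htend, H⟩
  obtain ⟨hxs1, hxs2⟩ := hxs
  obtain ⟨hys1, hys2⟩ := hys
  rcases eq_or_lt_of_le hys1 with hys1' | hys1'
  · -- ys = -1
    subst hys1'
    rcases eq_or_lt_of_le hxs1 with hxs1' | hxs1'
    · -- xs = -1 : first condition fails at y = -1 + δ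
      subst hxs1'
      set δ := min δ₀ 1 with hδdef
      have hδpos : 0 < δ := lt_min hδ₀ one_pos
      have hδ1 : δ ≤ 1 := min_le_right _ _
      have key := (H δ ⟨hδpos, min_le_left _ _⟩ (-1)
        (Set.mem_Icc.mpr ⟨le_refl _, by norm_num⟩) (-1 + δ)
        (Set.mem_Icc.mpr ⟨by linarith, by linarith⟩)
        (by simp [hδpos.le])
        (by rw [Real.norm_eq_abs, show (-1 + δ) - (-1) = δ by ring,
              abs_of_nonneg hδpos.le])).1
      simp only at key
      nlinarith [key, hδpos]
    · -- -1 < xs : second condition fails at x = xs - δ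
      have hc : (0:ℝ) < min δ₀ ((1 + xs)/2) := lt_min hδ₀ (by linarith)
      have hev1 : ∀ᶠ d in nhdsWithin (0:ℝ) (Set.Ioi 0), h d < (1 + xs)/2 :=
        htend.eventually_lt_const (by linarith)
      have hev2 : Set.Ioo (0:ℝ) (min δ₀ ((1 + xs)/2)) ∈ nhdsWithin (0:ℝ) (Set.Ioi 0) :=
        Ioo_mem_nhdsGT_of_mem ⟨le_refl 0, hc⟩
      obtain ⟨δ, hδh, hδmem⟩ := (hev1.and (eventually_of_mem hev2 (fun d hd => hd))).exists
      obtain ⟨hδpos, hδlt⟩ := hδmem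
      have hδδ₀ : δ ≤ δ₀ := (lt_of_lt_of_le hδlt (min_le_left _ _)).le
      have hδsmall : δ < (1 + xs)/2 := lt_of_lt_of_le hδlt (min_le_right _ _)
      have hhnn : 0 ≤ h δ := hnn δ ⟨hδpos, hδδ₀⟩
      have key := (H δ ⟨hδpos, hδδ₀⟩ (xs - δ)
        (Set.mem_Icc.mpr ⟨by linarith, by linarith⟩) (-1)
        (Set.mem_Icc.mpr ⟨le_refl _, by norm_num⟩)
        (by rw [Real.norm_eq_abs, show (xs - δ) - xs = -δ by ring, abs_neg,
              abs_of_nonneg hδpos.le])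
        (by simp [hδpos.le])).2
      have hsup : sSup ((fun y => y ^ 2 - 2 * (xs - δ) * y) ''
          (Set.Icc (-1:ℝ) 1 ∩ closedBall (-1) (h δ))) ≤ 1 + 2 * (xs - δ) := by
        apply sSup_image_le'
        · exact ⟨-1, Set.mem_Icc.mpr ⟨le_refl _, by norm_num⟩, mem_closedBall_self hhnn⟩
        · rintro y' ⟨hy'I, hy'B⟩
          obtain ⟨hy'1, hy'2⟩ := Set.mem_Icc.mp hy'I
          have hb : |y' - (-1)| ≤ h δ := by
            rwa [Metric.mem_closedBall, Real.dist_eq] at hy'B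
          have hy'3 : y' ≤ -1 + h δ := by
            have := abs_le.mp hb; linarith [this.2]
          have hhs : h δ < (1 + xs)/2 := hδh
          nlinarith [mul_nonneg (by linarith : (0:ℝ) ≤ 1 + y')
            (by linarith : (0:ℝ) ≤ 1 - y' + 2 * (xs - δ))]
      simp only at key
      nlinarith [le_trans key hsup]
  · rcases eq_or_lt_of_le hys2 with hys2' | hys2'
    · -- ys = 1
      subst hys2'
      rcases eq_or_lt_of_le hxs2 with hxs2' | hxs2'
      · -- xs = 1 : first condition fails at y = 1 - δ
        subst hxs2'
        set δ := min δ₀ 1 with hδdef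
        have hδpos : 0 < δ := lt_min hδ₀ one_pos
        have hδ1 : δ ≤ 1 := min_le_right _ _
        have key := (H δ ⟨hδpos, min_le_left _ _⟩ 1
          (Set.mem_Icc.mpr ⟨by norm_num, le_refl _⟩) (1 - δ)
          (Set.mem_Icc.mpr ⟨by linarith, by linarith⟩)
          (by simp [hδpos.le])
          (by rw [Real.norm_eq_abs, show (1 - δ) - 1 = -δ by ring, abs_neg,
                abs_of_nonneg hδpos.le])).1
        simp only at key
        nlinarith [key, hδpos]
      · -- xs < 1 : second condition fails at x = xs + δ
        have hc : (0:ℝ) < min δ₀ ((1 - xs)/2) := lt_min hδ₀ (by linarith)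
        have hev1 : ∀ᶠ d in nhdsWithin (0:ℝ) (Set.Ioi 0), h d < (1 - xs)/2 :=
          htend.eventually_lt_const (by linarith)
        have hev2 : Set.Ioo (0:ℝ) (min δ₀ ((1 - xs)/2)) ∈ nhdsWithin (0:ℝ) (Set.Ioi 0) :=
          Ioo_mem_nhdsGT_of_mem ⟨le_refl 0, hc⟩
        obtain ⟨δ, hδh, hδmem⟩ := (hev1.and (eventually_of_mem hev2 (fun d hd => hd))).exists
        obtain ⟨hδpos, hδlt⟩ := hδmem
        have hδδ₀ : δ ≤ δ₀ := (lt_of_lt_of_le hδlt (min_le_left _ _)).le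
        have hδsmall : δ < (1 - xs)/2 := lt_of_lt_of_le hδlt (min_le_right _ _)
        have hhnn : 0 ≤ h δ := hnn δ ⟨hδpos, hδδ₀⟩
        have key := (H δ ⟨hδpos, hδδ₀⟩ (xs + δ)
          (Set.mem_Icc.mpr ⟨by linarith, by linarith⟩) 1
          (Set.mem_Icc.mpr ⟨by norm_num, le_refl _⟩)
          (by rw [Real.norm_eq_abs, show (xs + δ) - xs = δ by ring,
                abs_of_nonneg hδpos.le])
          (by simp [hδpos.le])).2
        have hsup : sSup ((fun y => y ^ 2 - 2 * (xs + δ) * y) ''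
            (Set.Icc (-1:ℝ) 1 ∩ closedBall 1 (h δ))) ≤ 1 - 2 * (xs + δ) := by
          apply sSup_image_le'
          · exact ⟨1, Set.mem_Icc.mpr ⟨by norm_num, le_refl _⟩, mem_closedBall_self hhnn⟩
          · rintro y' ⟨hy'I, hy'B⟩
            obtain ⟨hy'1, hy'2⟩ := Set.mem_Icc.mp hy'I
            have hb : |y' - 1| ≤ h δ := by
              rwa [Metric.mem_closedBall, Real.dist_eq] at hy'B
            have hy'3 : 1 - h δ ≤ y' := by
              have := abs_le.mp hb; linarith [this.1]
            have hhs : h δ < (1 - xs)/2 := hδh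
            nlinarith [mul_nonneg (by linarith : (0:ℝ) ≤ 1 - y')
              (by linarith : (0:ℝ) ≤ 1 + y' - 2 * (xs + δ))]
        simp only at key
        nlinarith [le_trans key hsup]
    · -- -1 < ys < 1 : interior, first condition fails
      set δ := min δ₀ (min (1 - ys) (1 + ys)) with hδdef
      have hδpos : 0 < δ := lt_min hδ₀ (lt_min (by linarith) (by linarith))
      have hδa : δ ≤ 1 - ys := le_trans (min_le_right _ _) (min_le_left _ _)
      have hδb : δ ≤ 1 + ys := le_trans (min_le_right _ _) (min_le_right _ _)
      have key1 := (H δ ⟨hδpos, min_le_left _ _⟩ xs (Set.mem_Icc.mpr ⟨hxs1, hxs2⟩)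
        (ys + δ) (Set.mem_Icc.mpr ⟨by linarith, by linarith⟩)
        (by simp [hδpos.le])
        (by rw [Real.norm_eq_abs, show (ys + δ) - ys = δ by ring,
              abs_of_nonneg hδpos.le])).1
      have key2 := (H δ ⟨hδpos, min_le_left _ _⟩ xs (Set.mem_Icc.mpr ⟨hxs1, hxs2⟩)
        (ys - δ) (Set.mem_Icc.mpr ⟨by linarith, by linarith⟩)
        (by simp [hδpos.le])
        (by rw [Real.norm_eq_abs, show (ys - δ) - ys = -δ by ring, abs_neg,
              abs_of_nonneg hδpos.le])).1
      simp only at key1 key2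
      nlinarith [key1, key2, hδpos]
end
end

section
/- Let f: ℝ^{d₁} × ℝ^{d₂} → ℝ be twice continuously differentiable. Assume that for every fixed x, every local maximum of the function f(x,·) is a global maximum of f(x,·), and that f(x,·) is strongly concave in a neighborhood of each of its local maxima (i.e., ∇²_{yy} f(x,y) is negative definite at every local maximum y of f(x,·)). Then every global minimax point of f is also a local minimax point of f. -/
/-! The Hessian condition makes `ys` a strict local maximiser of `f xs`, so `f xs < f xs ys` on
small spheres around `ys`. By compactness of the sphere this persists for `x` near `xs`, so `f x`
attains its maximum over the ball in the interior. That local maximiser is a global one, and global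
minimaxity of `(xs, ys)` bounds its value below by `f xs ys`. Taking `h δ` to be (just above) the
least radius that works for all `x` within `δ` of `xs` gives the local minimax property. -/

open Metric Filter Set

noncomputable section

open Topology

section SecondDerivativeTest

variable {E : Type*} [NormedAddCommGroup E] [NormedSpace ℝ E]

lemma eventually_forall_apply_self_neg [FiniteDimensional ℝ E] {X : Type*} [TopologicalSpace X]
    {H : X → E →L[ℝ] E →L[ℝ] ℝ} {x₀ : X} (hH : ContinuousAt H x₀)
    (hneg : ∀ v ≠ 0, H x₀ v v < 0) : ∀ᶠ x in 𝓝 x₀, ∀ v ≠ 0, H x v v < 0 := by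
  have hsphere : ∀ᶠ x in 𝓝 x₀, ∀ u ∈ sphere (0 : E) 1, H x u u < 0 := by
    refine (isCompact_sphere 0 1).eventually_forall_of_forall_eventually fun u hu => ?_
    have hcont : ContinuousAt (fun p : X × E => H p.1 p.2 p.2) (x₀, u) :=
      ((hH.comp continuousAt_fst).clm_apply continuousAt_snd).clm_apply continuousAt_snd
    exact hcont.eventually_lt continuousAt_const (hneg u (ne_of_mem_sphere hu one_ne_zero))
  filter_upwards [hsphere] with x hx v hv
  have hv' : ‖v‖ ≠ 0 := norm_ne_zero_iff.2 hv
  have hu : ‖v‖⁻¹ • v ∈ sphere (0 : E) 1 := by simp [norm_smul, hv']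
  calc H x v v = ‖v‖ ^ 2 * H x (‖v‖⁻¹ • v) (‖v‖⁻¹ • v) := by
        simp only [map_smul, smul_apply, smul_eq_mul]
        field_simp
    _ < 0 := mul_neg_of_pos_of_neg (by positivity) (hx _ hu)

lemma lt_of_fderiv_eq_zero_of_hessian_neg_on_segment {F : E → ℝ} (hF : ContDiff ℝ 2 F)
    {y₀ y : E} (hcrit : fderiv ℝ F y₀ = 0)
    (hneg : ∀ z ∈ segment ℝ y₀ y, fderiv ℝ (fderiv ℝ F) z (y - y₀) (y - y₀) < 0) :
    F y < F y₀ := by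
  set v := y - y₀
  set γ : ℝ → E := fun t => y₀ + t • v
  have hγ : ∀ t, HasDerivAt γ v t := fun t =>
    (((hasDerivAt_id' t).smul_const v).const_add y₀).congr_deriv (one_smul ℝ v)
  have hγseg : ∀ t ∈ Icc (0 : ℝ) 1, γ t ∈ segment ℝ y₀ y := fun t ht => by
    rw [segment_eq_image']; exact mem_image_of_mem _ ht
  have hDF : ContDiff ℝ 1 (fderiv ℝ F) := hF.fderiv_right (by norm_num)
  have hg : ∀ t, HasDerivAt (fun t => F (γ t)) (fderiv ℝ F (γ t) v) t := fun t =>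
    ((hF.differentiable (by norm_num)).differentiableAt.hasFDerivAt).comp_hasDerivAt t (hγ t)
  have hg' : ∀ t, HasDerivAt (fun t => fderiv ℝ F (γ t) v)
      (fderiv ℝ (fderiv ℝ F) (γ t) v v) t := fun t =>
    (ContinuousLinearMap.apply ℝ ℝ v).hasFDerivAt.comp_hasDerivAt t
      ((hDF.differentiable one_ne_zero).differentiableAt.hasFDerivAt.comp_hasDerivAt t (hγ t))
  have hg'_anti : StrictAntiOn (fun t => fderiv ℝ F (γ t) v) (Icc 0 1) := by
    refine strictAntiOn_of_deriv_neg (convex_Icc 0 1)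
      (fun t _ => (hg' t).continuousAt.continuousWithinAt) fun t ht => ?_
    rw [interior_Icc] at ht
    rw [(hg' t).deriv]
    exact hneg _ (hγseg t (Ioo_subset_Icc_self ht))
  have hg_anti : StrictAntiOn (fun t => F (γ t)) (Icc 0 1) := by
    refine strictAntiOn_of_deriv_neg (convex_Icc 0 1)
      (fun t _ => (hg t).continuousAt.continuousWithinAt) fun t ht => ?_
    rw [interior_Icc] at ht
    rw [(hg t).deriv]
    have := hg'_anti (left_mem_Icc.2 zero_le_one) (Ioo_subset_Icc_self ht) ht.1
    simpa [γ, hcrit] using this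
  simpa [γ, v] using hg_anti (left_mem_Icc.2 zero_le_one) (right_mem_Icc.2 zero_le_one) one_pos

lemma eventually_lt_of_fderiv_eq_zero_of_hessian_neg [FiniteDimensional ℝ E] {F : E → ℝ}
    (hF : ContDiff ℝ 2 F) {y₀ : E} (hcrit : fderiv ℝ F y₀ = 0)
    (hneg : ∀ v ≠ 0, fderiv ℝ (fderiv ℝ F) y₀ v v < 0) :
    ∀ᶠ y in 𝓝[≠] y₀, F y < F y₀ := by
  have hH : Continuous (fderiv ℝ (fderiv ℝ F)) :=
    (hF.fderiv_right (by norm_num)).continuous_fderiv one_ne_zero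
  obtain ⟨r, hr, hball⟩ :=
    Metric.eventually_nhds_iff_ball.1 (eventually_forall_apply_self_neg hH.continuousAt hneg)
  rw [eventually_nhdsWithin_iff]
  filter_upwards [ball_mem_nhds y₀ hr] with y hy (hne : y ≠ y₀)
  exact lt_of_fderiv_eq_zero_of_hessian_neg_on_segment hF hcrit fun z hz =>
    hball z ((convex_ball y₀ r).segment_subset (mem_ball_self hr) hy hz) _ (sub_ne_zero.2 hne)

end SecondDerivativeTest

lemma eventually_exists_isLocalMax_mem_ball {X Y : Type*} [TopologicalSpace X]
    [PseudoMetricSpace Y] [ProperSpace Y] {f : X → Y → ℝ}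
    (hf : Continuous (Function.uncurry f))
    {x₀ : X} {y₀ : Y} {ε : ℝ} (hε : 0 ≤ ε) (hlt : ∀ y ∈ sphere y₀ ε, f x₀ y < f x₀ y₀) :
    ∀ᶠ x in 𝓝 x₀, ∃ y ∈ ball y₀ ε, IsLocalMax (f x) y := by
  have hsphere : ∀ᶠ x in 𝓝 x₀, ∀ y ∈ sphere y₀ ε, f x y < f x y₀ :=
    (isCompact_sphere y₀ ε).eventually_forall_of_forall_eventually fun y hy =>
      hf.continuousAt.eventually_lt
        (hf.comp (continuous_fst.prodMk continuous_const)).continuousAt (hlt y hy)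
  filter_upwards [hsphere] with x hx
  exact (isCompact_closedBall y₀ ε).exists_isLocalMax_mem_open ball_subset_closedBall
    (hf.comp (Continuous.prodMk_right x)).continuousOn (mem_closedBall_self hε)
    (by rwa [closedBall_sdiff_ball]) isOpen_ball

lemma exists_tendsto_zero_of_forall_pos_eventually {Q : ℝ → ℝ → Prop}
    (hmono : ∀ δ, Monotone (Q δ)) (hQ : ∀ ε > 0, ∀ᶠ δ in 𝓝[>] 0, Q δ ε) :
    ∃ h : ℝ → ℝ, Tendsto h (𝓝[>] 0) (𝓝 0) ∧ ∀ᶠ δ in 𝓝[>] 0, 0 ≤ h δ ∧ Q δ (h δ) := by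
  set S : ℝ → Set ℝ := fun δ => {ε | 0 < ε ∧ Q δ ε}
  have hS_nonneg : ∀ δ, 0 ≤ sInf (S δ) := fun δ => Real.sInf_nonneg fun ε hε => hε.1.le
  have hinf : Tendsto (fun δ => sInf (S δ)) (𝓝[>] 0) (𝓝 0) := by
    refine tendsto_order.2 ⟨fun a ha => .of_forall fun δ => ha.trans_le (hS_nonneg δ),
      fun a ha => ?_⟩
    filter_upwards [hQ (a / 2) (by positivity)] with δ hδ
    have hmem : a / 2 ∈ S δ := ⟨by positivity, hδ⟩
    exact (csInf_le ⟨0, fun ε hε => hε.1.le⟩ hmem).trans_lt (by linarith)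
  -- the infimum need not be admissible; adding `δ > 0` puts an admissible radius below `h δ`
  refine ⟨fun δ => sInf (S δ) + δ,
    by simpa using hinf.add (tendsto_nhdsWithin_of_tendsto_nhds tendsto_id), ?_⟩
  filter_upwards [hQ 1 one_pos, self_mem_nhdsWithin] with δ hδ1 (hδ : 0 < δ)
  have hne : (S δ).Nonempty := ⟨1, one_pos, hδ1⟩
  obtain ⟨ε, hεS, hεlt⟩ := exists_lt_of_csInf_lt hne (lt_add_of_pos_right _ hδ)
  exact ⟨by linarith [hS_nonneg δ], hmono δ hεlt.le hεS.2⟩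

lemma isLocalMinimax_of_eventually_exists_le {d₁ d₂ : ℕ}
    {f : EuclideanSpace ℝ (Fin d₁) → EuclideanSpace ℝ (Fin d₂) → ℝ}
    {xs : EuclideanSpace ℝ (Fin d₁)} {ys : EuclideanSpace ℝ (Fin d₂)}
    (hcont : ∀ x, Continuous (f x)) (hmax : ∀ y, f xs y ≤ f xs ys)
    (hnear : ∀ ε > 0, ∀ᶠ x in 𝓝 xs, ∃ y ∈ closedBall ys ε, f xs ys ≤ f x y) :
    IsLocalMinimax f xs ys := by
  obtain ⟨h, hh, hev⟩ := exists_tendsto_zero_of_forall_pos_eventually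
    (Q := fun δ ε => ∀ x ∈ closedBall xs δ, ∃ y ∈ closedBall ys ε, f xs ys ≤ f x y)
    (fun δ ε ε' hle hQ x hx =>
      (hQ x hx).imp fun y hy => ⟨closedBall_subset_closedBall hle hy.1, hy.2⟩)
    fun ε hε => (eventually_closedBall_subset (hnear ε hε)).filter_mono nhdsWithin_le_nhds
  obtain ⟨δ₀, hδ₀, hδ₀h⟩ := (nhdsGT_basis_Ioc 0).eventually_iff.1 hev
  refine ⟨δ₀, hδ₀, h, fun δ hδ => (hδ₀h hδ).1, hh, fun δ hδ x y hx _ => ⟨hmax y, ?_⟩⟩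
  obtain ⟨y', hy', hle⟩ := (hδ₀h hδ).2 x (mem_closedBall_iff_norm.2 hx)
  exact hle.trans <|
    le_csSup ((isCompact_closedBall ys _).image (hcont x)).bddAbove (mem_image_of_mem _ hy')

/-- If `f` is twice continuously differentiable, every local maximum of
`f x ·` is a global maximum of `f x ·` for every `x`, and `f x ·` is strongly
concave near each of its local maxima (`∇²_{yy} f` is negative definite at
local maxima of `f x ·`), then every global minimax point of `f` is a local
minimax point.  The hypothesis `hgmin` expresses
`f xs ys ≤ max_{y'} f x y'` (for every `x`) in a sup-free way. -/
theorem stmt_12 {d₁ d₂ : ℕ}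
    (f : EuclideanSpace ℝ (Fin d₁) → EuclideanSpace ℝ (Fin d₂) → ℝ)
    (hf : ContDiff ℝ 2
      (fun p : EuclideanSpace ℝ (Fin d₁) × EuclideanSpace ℝ (Fin d₂) => f p.1 p.2))
    (hloc_glob : ∀ x y, IsLocalMax (f x) y → ∀ y', f x y' ≤ f x y)
    (hconc : ∀ x y, IsLocalMax (f x) y →
      ∀ v : EuclideanSpace ℝ (Fin d₂), v ≠ 0 →
        fderiv ℝ (fun y' => fderiv ℝ (f x) y') y v v < 0)
    (xs : EuclideanSpace ℝ (Fin d₁)) (ys : EuclideanSpace ℝ (Fin d₂))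
    (hgmax : ∀ y, f xs y ≤ f xs ys)
    (hgmin : ∀ x (c : ℝ), (∀ y, f x y ≤ c) → f xs ys ≤ c) :
    IsLocalMinimax f xs ys := by
  have hcont : Continuous (Function.uncurry f) := hf.continuous
  have hmax : IsLocalMax (f xs) ys := .of_forall hgmax
  obtain ⟨r, hr, hstrict⟩ := Metric.mem_nhdsWithin_iff.1 <|
    eventually_lt_of_fderiv_eq_zero_of_hessian_neg (hf.comp (contDiff_const.prodMk contDiff_id))
      hmax.fderiv_eq_zero (hconc xs ys hmax)
  refine isLocalMinimax_of_eventually_exists_le (fun x => hcont.comp (.prodMk_right x)) hgmax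
    fun ε hε => ?_
  have hρ : 0 < min ε (r / 2) := by positivity
  have hsphere : ∀ y ∈ sphere ys (min ε (r / 2)), f xs y < f xs ys := fun y hy =>
    hstrict ⟨by rw [mem_ball, mem_sphere.1 hy]; linarith [min_le_right ε (r / 2)],
      ne_of_mem_sphere hy hρ.ne'⟩
  -- a local maximiser of `f x` near `ys` is a global one, so its value is at least `f xs ys`
  filter_upwards [eventually_exists_isLocalMax_mem_ball hcont hρ.le hsphere]
    with x ⟨y, hy, hlocal⟩
  exact ⟨y, closedBall_subset_closedBall (min_le_left _ _) (ball_subset_closedBall hy),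
    hgmin x _ (hloc_glob x y hlocal)⟩
end
end

section
/- Let A ∈ ℝ^{d₁×d₁} and B ∈ ℝ^{d₂×d₂} be symmetric matrices with A positive definite and B negative definite, let C ∈ ℝ^{d₁×d₂} be arbitrary, and let γ > 0. Then every complex eigenvalue λ of the block matrix J_γ = [[−(1/γ)A, −(1/γ)C], [Cᵀ, B]] satisfies Re(λ) < 0. -/
open Matrix

noncomputable section
open Polynomial


private lemma re_quad {n : ℕ} (A : Matrix (Fin n) (Fin n) ℝ) (x : Fin n → ℂ) :
    (star x ⬝ᵥ (A.map (fun r : ℝ => (r : ℂ))) *ᵥ x).re =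
      (fun i => (x i).re) ⬝ᵥ A *ᵥ (fun i => (x i).re)
        + (fun i => (x i).im) ⬝ᵥ A *ᵥ (fun i => (x i).im) := by
  simp only [dotProduct, mulVec, Matrix.map_apply, Pi.star_apply, Complex.re_sum,
    Finset.mul_sum, ← Finset.sum_add_distrib]
  refine Finset.sum_congr rfl fun i _ => Finset.sum_congr rfl fun j _ => ?_
  simp [Complex.mul_re, Complex.mul_im, RCLike.star_def, Complex.conj_re, Complex.conj_im]

private lemma smul_map_complex {m n : ℕ} (r : ℝ) (M : Matrix (Fin m) (Fin n) ℝ) :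
    ((r • M).map (fun t : ℝ => (t : ℂ))) = (r : ℂ) • (M.map (fun t : ℝ => (t : ℂ))) := by
  ext i j; simp

private lemma conj_dot {m n : ℕ} (C : Matrix (Fin m) (Fin n) ℝ) (x : Fin m → ℂ)
    (y : Fin n → ℂ) :
    star y ⬝ᵥ (Cᵀ.map (fun t : ℝ => (t : ℂ))) *ᵥ x
      = starRingEnd ℂ (star x ⬝ᵥ (C.map (fun t : ℝ => (t : ℂ))) *ᵥ y) := by
  simp only [dotProduct, mulVec, Matrix.map_apply, transpose_apply, Pi.star_apply,
    map_sum, Finset.mul_sum, _root_.map_mul, Complex.conj_ofReal, RCLike.star_def,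
    Complex.conj_conj]
  rw [Finset.sum_comm]
  refine Finset.sum_congr rfl fun i _ => Finset.sum_congr rfl fun j _ => ?_
  ring

private lemma sum_normSq_dot {n : ℕ} (x : Fin n → ℂ) :
    star x ⬝ᵥ x = ((∑ i, Complex.normSq (x i) : ℝ) : ℂ) := by
  simp [dotProduct, RCLike.star_def, Complex.normSq_eq_conj_mul_self]

private lemma normSq_sum_pos {n : ℕ} {x : Fin n → ℂ} (hx : x ≠ 0) :
    0 < ∑ i, Complex.normSq (x i) := by
  obtain ⟨i, hi⟩ := Function.ne_iff.mp hx
  exact Finset.sum_pos' (fun j _ => Complex.normSq_nonneg _)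
    ⟨i, Finset.mem_univ i, Complex.normSq_pos.mpr hi⟩

private lemma quad_re_nonneg {n : ℕ} {A : Matrix (Fin n) (Fin n) ℝ} (hA : A.PosDef)
    (x : Fin n → ℂ) : 0 ≤ (star x ⬝ᵥ (A.map (fun r : ℝ => (r : ℂ))) *ᵥ x).re := by
  rw [re_quad]
  have h1 := hA.posSemidef.re_dotProduct_nonneg (fun i => (x i).re)
  have h2 := hA.posSemidef.re_dotProduct_nonneg (fun i => (x i).im)
  simp only [RCLike.re_to_real, star_trivial] at h1 h2
  linarith

private lemma quad_re_pos {n : ℕ} {A : Matrix (Fin n) (Fin n) ℝ} (hA : A.PosDef)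
    {x : Fin n → ℂ} (hx : x ≠ 0) :
    0 < (star x ⬝ᵥ (A.map (fun r : ℝ => (r : ℂ))) *ᵥ x).re := by
  rw [re_quad]
  have hre : ¬((fun i => (x i).re) = 0 ∧ (fun i => (x i).im) = 0) := by
    rintro ⟨h1, h2⟩
    exact hx (funext fun i => Complex.ext (congrFun h1 i) (congrFun h2 i))
  have hns : ∀ z : Fin n → ℝ, 0 ≤ z ⬝ᵥ A *ᵥ z := fun z => by
    simpa using hA.posSemidef.re_dotProduct_nonneg z
  have hpos : ∀ z : Fin n → ℝ, z ≠ 0 → 0 < z ⬝ᵥ A *ᵥ z := fun z hz => by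
    simpa using hA.re_dotProduct_pos hz
  rcases Classical.em ((fun i => (x i).re) = 0) with h | h
  · have h2 : (fun i => (x i).im) ≠ 0 := fun h2 => hre ⟨h, h2⟩
    have := hpos _ h2
    have := hns (fun i => (x i).re)
    linarith
  · have := hpos _ h
    have := hns (fun i => (x i).im)
    linarith


/-- Every strict local Nash equilibrium is a strict linearly stable point of
`γ-GDA`: if `A` is symmetric positive definite, `B` is symmetric negative
definite, and `γ > 0`, then every complex eigenvalue `λ` of the Jacobian
`J_γ = [[-(1/γ)A, -(1/γ)C], [Cᵀ, B]]` has `Re λ < 0`. -/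
theorem stmt_13 {d₁ d₂ : ℕ}
    (A : Matrix (Fin d₁) (Fin d₁) ℝ) (B : Matrix (Fin d₂) (Fin d₂) ℝ)
    (C : Matrix (Fin d₁) (Fin d₂) ℝ) (γ : ℝ) (hγ : 0 < γ)
    (hA : A.PosDef) (hB : (-B).PosDef) (lam : ℂ)
    (hlam : ((Matrix.fromBlocks ((-(1 / γ)) • A) ((-(1 / γ)) • C) Cᵀ B).map
        fun r : ℝ => (r : ℂ)).charpoly.IsRoot lam) :
    lam.re < 0 := by
  set M := ((Matrix.fromBlocks ((-(1 / γ)) • A) ((-(1 / γ)) • C) Cᵀ B).map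
      fun r : ℝ => (r : ℂ)) with hM
  obtain ⟨v, hv, hmv⟩ : ∃ v ≠ 0, M *ᵥ v = lam • v := by
    have hdet : (lam • (1 : Matrix (Fin d₁ ⊕ Fin d₂) (Fin d₁ ⊕ Fin d₂) ℂ) - M).det = 0 := by
      have h := hlam
      rw [Polynomial.IsRoot, Matrix.charpoly, ← coe_evalRingHom, RingHom.map_det] at h
      convert h using 2
      ext i j
      simp [charmatrix_apply, Matrix.diagonal, Matrix.one_apply, Matrix.smul_apply, mul_comm,
        apply_ite (eval lam)]
    obtain ⟨v, hv, hmv⟩ := (Matrix.exists_mulVec_eq_zero_iff).2 hdet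
    refine ⟨v, hv, ?_⟩
    rw [Matrix.sub_mulVec, sub_eq_zero] at hmv
    rw [← hmv, Matrix.smul_mulVec, Matrix.one_mulVec]
  set x : Fin d₁ → ℂ := fun i => v (Sum.inl i) with hx
  set y : Fin d₂ → ℂ := fun j => v (Sum.inr j) with hy
  have hv' : v = Sum.elim x y := by funext s; cases s <;> rfl
  set A' := A.map (fun r : ℝ => (r : ℂ)) with hA'
  set B' := B.map (fun r : ℝ => (r : ℂ)) with hB'
  set C' := C.map (fun r : ℝ => (r : ℂ)) with hC'
  have hMblocks : M = fromBlocks ((-(1/γ) : ℂ) • A') ((-(1/γ) : ℂ) • C')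
      (Cᵀ.map (fun r : ℝ => (r : ℂ))) B' := by
    rw [hM, Matrix.fromBlocks_map, smul_map_complex, smul_map_complex]
    push_cast
    rfl
  rw [hMblocks, hv', fromBlocks_mulVec] at hmv
  have h1 : ((-(1/γ) : ℂ) • A') *ᵥ x + ((-(1/γ) : ℂ) • C') *ᵥ y = lam • x := by
    funext i
    simpa using congrFun hmv (Sum.inl i)
  have h2 : (Cᵀ.map (fun r : ℝ => (r : ℂ))) *ᵥ x + B' *ᵥ y = lam • y := by
    funext j
    simpa using congrFun hmv (Sum.inr j)
  set qA := star x ⬝ᵥ A' *ᵥ x with hqA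
  set qB := star y ⬝ᵥ B' *ᵥ y with hqB
  set qC := star x ⬝ᵥ C' *ᵥ y with hqC
  set sx := star x ⬝ᵥ x with hsx
  set sy := star y ⬝ᵥ y with hsy
  have hγc : (γ : ℂ) ≠ 0 := by exact_mod_cast hγ.ne'
  have e1 : (-(1/γ) : ℂ) * qA + (-(1/γ) : ℂ) * qC = lam * sx := by
    have h := congrArg (fun w => star x ⬝ᵥ w) h1
    simpa [dotProduct_add, Matrix.smul_mulVec, dotProduct_smul, smul_eq_mul,
      one_div, Matrix.neg_mulVec, dotProduct_neg, neg_smul] using h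
  have e2 : starRingEnd ℂ qC + qB = lam * sy := by
    have h := congrArg (fun w => star y ⬝ᵥ w) h2
    simpa [dotProduct_add, dotProduct_smul, smul_eq_mul, conj_dot C x y] using h
  have e1' : -qA - qC = (γ : ℂ) * (lam * sx) := by
    have h := congrArg (fun z => (γ : ℂ) * z) e1
    simp only [mul_add, ← mul_assoc] at h
    rw [show (γ : ℂ) * (-(1/γ) : ℂ) = -1 by field_simp] at h
    linear_combination h
  have E : -qA - qC + starRingEnd ℂ qC + qB = lam * ((γ : ℂ) * sx + sy) := by
    rw [mul_add, ← e2, ← mul_assoc, mul_comm lam (γ:ℂ), mul_assoc, ← e1']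
    ring
  set rx := ∑ i, Complex.normSq (x i) with hrx
  set ry := ∑ j, Complex.normSq (y j) with hry
  have hsx' : sx = ((rx : ℝ) : ℂ) := sum_normSq_dot x
  have hsy' : sy = ((ry : ℝ) : ℂ) := sum_normSq_dot y
  have Ere : -qA.re + qB.re = lam.re * (γ * rx + ry) := by
    have h := congrArg Complex.re E
    rw [hsx', hsy'] at h
    simpa [Complex.add_re, Complex.sub_re, Complex.neg_re, Complex.conj_re, Complex.mul_re,
      Complex.ofReal_re, Complex.ofReal_im] using h
  have hBneg : B' = -((-B).map (fun r : ℝ => (r : ℂ))) := by ext i j; simp [hB']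
  have hqBeq : qB = -(star y ⬝ᵥ ((-B).map (fun r : ℝ => (r : ℂ))) *ᵥ y) := by
    rw [hqB, hBneg, Matrix.neg_mulVec, dotProduct_neg]
  have hqA0 : 0 ≤ qA.re := quad_re_nonneg hA x
  have hqB0 : qB.re ≤ 0 := by
    rw [hqBeq, Complex.neg_re]
    have := quad_re_nonneg hB y
    linarith
  have hxy : x ≠ 0 ∨ y ≠ 0 := by
    by_contra h
    push_neg at h
    apply hv
    rw [hv', h.1, h.2]
    funext s; cases s <;> rfl
  have hlhs : -qA.re + qB.re < 0 := by
    rcases hxy with h | h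
    · have := quad_re_pos hA h
      rw [← hqA] at this
      linarith
    · have := quad_re_pos hB h
      have : qB.re < 0 := by rw [hqBeq, Complex.neg_re]; linarith
      linarith
  have hrx0 : 0 ≤ rx := Finset.sum_nonneg fun i _ => Complex.normSq_nonneg _
  have hry0 : 0 ≤ ry := Finset.sum_nonneg fun j _ => Complex.normSq_nonneg _
  have ht : 0 < γ * rx + ry := by
    rcases hxy with h | h
    · have := normSq_sum_pos h
      nlinarith
    · have := normSq_sum_pos h
      nlinarith
  nlinarith [Ere, hlhs, ht]
end
end

section
/- Let A ∈ ℝ^{d₁×d₁} and B ∈ ℝ^{d₂×d₂} be symmetric and C ∈ ℝ^{d₁×d₂}. If B is negative definite and A − C B^{-1} Cᵀ is positive definite, then there exists γ₀ > 0 such that for every γ > γ₀, every complex eigenvalue λ of the block matrix J_γ = [[−(1/γ)A, −(1/γ)C], [Cᵀ, B]] satisfies Re(λ) < 0. (That is, every strict local minimax point of a twice-differentiable f is a strict linearly stable point of γ-GDA for all sufficiently large γ.) -/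
/-!
Put `g = 1/γ`, `P = B⁻¹Cᵀ` and `S = A - C B⁻¹ Cᵀ`. Conjugating `J_γ` by `[[1, 0], [P, 1]]` gives
`K_g = [[-g S, -g C], [-g P S, B - g P C]]`. Since `S` and `-B` are coercive, the terms
`-g uᵀ S u` and `vᵀ B v` of the real quadratic form of `K_g` dominate all the others by AM–GM once
`g` is small, so that form is negative definite. For a real matrix `K` and a complex eigenvector
`v = a + i b`, `Re (v* K v) = aᵀ K a + bᵀ K b`, so every eigenvalue of `K_g`, hence of `J_γ`,
has negative real part.
-/

open Matrix

theorem exists_pos_forall_quadratic_neg {s b : ℝ} (hs : 0 < s) (hb : 0 < b) (c c' : ℝ) :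
    ∃ g₀ > 0, ∀ g : ℝ, 0 < g → g < g₀ → ∀ p q : ℝ, (p ≠ 0 ∨ q ≠ 0) →
      g * (-(s * p ^ 2) + c * p * q + c' * q ^ 2) - b * q ^ 2 < 0 := by
  set k := c ^ 2 / (2 * s) + |c'|
  refine ⟨b / (k + 1), by positivity, fun g hg hg₀ p q hpq => ?_⟩
  rw [lt_div_iff₀ (by positivity)] at hg₀
  have amgm : c * p * q ≤ s / 2 * p ^ 2 + c ^ 2 / (2 * s) * q ^ 2 := by
    have e : s / 2 * p ^ 2 + c ^ 2 / (2 * s) * q ^ 2 - c * p * q =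
        (s * p - c * q) ^ 2 / (2 * s) := by
      field_simp; ring
    have : 0 ≤ (s * p - c * q) ^ 2 / (2 * s) := by positivity
    linarith
  have hc' : c' * q ^ 2 ≤ |c'| * q ^ 2 := by gcongr; exact le_abs_self c'
  calc g * (-(s * p ^ 2) + c * p * q + c' * q ^ 2) - b * q ^ 2
      ≤ -(g * s / 2 * p ^ 2) - (b - g * k) * q ^ 2 := by
        nlinarith [mul_le_mul_of_nonneg_left amgm hg.le, mul_le_mul_of_nonneg_left hc' hg.le]
    _ < 0 := by
        have hbk : 0 < b - g * k := by nlinarith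
        rcases hpq with hp | hq
        · have : 0 < g * s / 2 * p ^ 2 := by positivity
          nlinarith [mul_nonneg hbk.le (sq_nonneg q)]
        · have : 0 < (b - g * k) * q ^ 2 := by positivity
          nlinarith [mul_nonneg (mul_nonneg hg.le hs.le) (sq_nonneg p)]

namespace Matrix

variable {m n : Type*} [Fintype m] [Fintype n]

theorem abs_dotProduct_mulVec_le (M : Matrix m n ℝ) (x : m → ℝ) (y : n → ℝ) :
    |x ⬝ᵥ M *ᵥ y| ≤ (∑ i, ∑ j, |M i j|) * (‖x‖ * ‖y‖) := by
  simp only [dotProduct, mulVec, Finset.mul_sum, Finset.sum_mul]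
  refine (Finset.abs_sum_le_sum_abs _ _).trans (Finset.sum_le_sum fun i _ => ?_)
  refine (Finset.abs_sum_le_sum_abs _ _).trans (Finset.sum_le_sum fun j _ => ?_)
  have hx : |x i| ≤ ‖x‖ := norm_le_pi_norm x i
  have hy : |y j| ≤ ‖y‖ := norm_le_pi_norm y j
  rw [abs_mul, abs_mul, ← mul_assoc, mul_comm |x i|, mul_assoc]
  gcongr

theorem PosDef.exists_pos_mul_sq_norm_le {S : Matrix n n ℝ} (hS : S.PosDef) :
    ∃ s > 0, ∀ x : n → ℝ, s * ‖x‖ ^ 2 ≤ x ⬝ᵥ S *ᵥ x := by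
  cases isEmpty_or_nonempty n
  · exact ⟨1, one_pos, fun x => by simp [Subsingleton.elim x 0]⟩
  have hpos : ∀ x : n → ℝ, x ≠ 0 → 0 < x ⬝ᵥ S *ᵥ x := fun x hx => by
    simpa using hS.dotProduct_mulVec_pos hx
  have hcont : Continuous fun x : n → ℝ => x ⬝ᵥ S *ᵥ x := by
    simp only [dotProduct, mulVec]
    fun_prop
  obtain ⟨x₀, hx₀, hmin⟩ := (isCompact_sphere (0 : n → ℝ) 1).exists_isMinOn
    (NormedSpace.sphere_nonempty.2 zero_le_one) hcont.continuousOn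
  refine ⟨_, hpos x₀ (ne_zero_of_mem_unit_sphere ⟨x₀, hx₀⟩), fun x => ?_⟩
  rcases eq_or_ne x 0 with rfl | hx
  · simp
  have hnx : ‖x‖ ≠ 0 := norm_ne_zero_iff.2 hx
  have hu : ‖x‖⁻¹ • x ∈ Metric.sphere (0 : n → ℝ) 1 := by
    simp [norm_smul, hnx]
  calc x₀ ⬝ᵥ S *ᵥ x₀ * ‖x‖ ^ 2 ≤ (‖x‖⁻¹ • x) ⬝ᵥ S *ᵥ (‖x‖⁻¹ • x) * ‖x‖ ^ 2 := by
        gcongr; exact hmin hu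
    _ = x ⬝ᵥ S *ᵥ x := by
        rw [mulVec_smul, smul_dotProduct, dotProduct_smul, smul_eq_mul, smul_eq_mul]
        field_simp

theorem exists_pos_dotProduct_fromBlocks_mulVec_neg {S : Matrix m m ℝ} {B : Matrix n n ℝ}
    (hS : S.PosDef) (hB : (-B).PosDef) (E : Matrix m n ℝ) (F : Matrix n m ℝ) (G : Matrix n n ℝ) :
    ∃ g₀ > 0, ∀ g : ℝ, 0 < g → g < g₀ → ∀ x ≠ 0,
      x ⬝ᵥ fromBlocks (-g • S) (-g • E) (-g • F) (B - g • G) *ᵥ x < 0 := by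
  obtain ⟨s, hs, hS⟩ := hS.exists_pos_mul_sq_norm_le
  obtain ⟨b, hb, hB⟩ := hB.exists_pos_mul_sq_norm_le
  obtain ⟨g₀, hg₀, hq⟩ := exists_pos_forall_quadratic_neg hs hb
    ((∑ i, ∑ j, |E i j|) + ∑ i, ∑ j, |F i j|) (∑ i, ∑ j, |G i j|)
  refine ⟨g₀, hg₀, fun g hg hgg₀ x hx => ?_⟩
  obtain ⟨u, v, rfl⟩ : ∃ u v, x = Sum.elim u v := ⟨_, _, (Sum.elim_comp_inl_inr x).symm⟩
  have huv : ‖u‖ ≠ 0 ∨ ‖v‖ ≠ 0 := by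
    by_contra! h
    exact hx (by simp [norm_eq_zero.1 h.1, norm_eq_zero.1 h.2])
  have hE := abs_dotProduct_mulVec_le E u v
  have hF := abs_dotProduct_mulVec_le F v u
  have hG := abs_dotProduct_mulVec_le G v v
  have hSu := hS u
  have hBv := hB v
  rw [neg_mulVec, dotProduct_neg] at hBv
  have hcross : -(u ⬝ᵥ S *ᵥ u) - u ⬝ᵥ E *ᵥ v - v ⬝ᵥ F *ᵥ u - v ⬝ᵥ G *ᵥ v ≤
      -(s * ‖u‖ ^ 2) + ((∑ i, ∑ j, |E i j|) + ∑ i, ∑ j, |F i j|) * ‖u‖ * ‖v‖ +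
        (∑ i, ∑ j, |G i j|) * ‖v‖ ^ 2 := by
    linarith [neg_abs_le (u ⬝ᵥ E *ᵥ v), neg_abs_le (v ⬝ᵥ F *ᵥ u), neg_abs_le (v ⬝ᵥ G *ᵥ v)]
  calc Sum.elim u v ⬝ᵥ fromBlocks (-g • S) (-g • E) (-g • F) (B - g • G) *ᵥ Sum.elim u v
      = g * (-(u ⬝ᵥ S *ᵥ u) - u ⬝ᵥ E *ᵥ v - v ⬝ᵥ F *ᵥ u - v ⬝ᵥ G *ᵥ v) + v ⬝ᵥ B *ᵥ v := by
        simp only [fromBlocks_mulVec, sumElim_dotProduct_sumElim, smul_mulVec, sub_mulVec,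
          dotProduct_add, dotProduct_sub, dotProduct_smul, Sum.elim_comp_inl,
          Sum.elim_comp_inr]
        ring
    _ ≤ g * (-(s * ‖u‖ ^ 2) + ((∑ i, ∑ j, |E i j|) + ∑ i, ∑ j, |F i j|) * ‖u‖ * ‖v‖ +
        (∑ i, ∑ j, |G i j|) * ‖v‖ ^ 2) - b * ‖v‖ ^ 2 := by
        linarith [mul_le_mul_of_nonneg_left hcross hg.le]
    _ < 0 := hq g hg hgg₀ _ _ huv

theorem re_star_dotProduct_map_ofReal_mulVec (M : Matrix n n ℝ) (v : n → ℂ) :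
    (star v ⬝ᵥ M.map (↑) *ᵥ v).re =
      (fun i => (v i).re) ⬝ᵥ M *ᵥ (fun i => (v i).re) +
        (fun i => (v i).im) ⬝ᵥ M *ᵥ (fun i => (v i).im) := by
  simp only [dotProduct, mulVec, Finset.mul_sum, Complex.re_sum, ← Finset.sum_add_distrib]
  refine Finset.sum_congr rfl fun i _ => Finset.sum_congr rfl fun j _ => ?_
  simp [Complex.mul_re, Complex.mul_im]

open scoped ComplexOrder in
theorem re_neg_of_isRoot_charpoly_map_ofReal [DecidableEq n] {M : Matrix n n ℝ}
    (hM : ∀ x ≠ 0, x ⬝ᵥ M *ᵥ x < 0) {μ : ℂ} (hμ : (M.map ((↑) : ℝ → ℂ)).charpoly.IsRoot μ) :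
    μ.re < 0 := by
  obtain ⟨v, hv⟩ := ((Module.End.hasEigenvalue_iff_isRoot_charpoly
    (toLin' (M.map ((↑) : ℝ → ℂ))) μ).2 (by rwa [charpoly_toLin'])).exists_hasEigenvector
  have hMv : M.map (↑) *ᵥ v = μ • v := hv.apply_eq_smul
  have hvv : 0 < star v ⬝ᵥ v := dotProduct_star_self_pos_iff.2 hv.2
  have hre := re_star_dotProduct_map_ofReal_mulVec M v
  have hparts : (fun i => (v i).re) ≠ 0 ∨ (fun i => (v i).im) ≠ 0 := by
    by_contra! h
    exact hv.2 (funext fun i => Complex.ext (congrFun h.1 i) (congrFun h.2 i))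
  have hM' : ∀ x, x ⬝ᵥ M *ᵥ x ≤ 0 := fun x => by
    rcases eq_or_ne x 0 with rfl | hx
    · simp
    · exact (hM x hx).le
  have hneg : (fun i => (v i).re) ⬝ᵥ M *ᵥ (fun i => (v i).re) +
      (fun i => (v i).im) ⬝ᵥ M *ᵥ (fun i => (v i).im) < 0 := by
    rcases hparts with h | h
    · linarith [hM _ h, hM' fun i => (v i).im]
    · linarith [hM _ h, hM' fun i => (v i).re]
  rw [hMv, dotProduct_smul, smul_eq_mul, Complex.mul_re, ← (Complex.pos_iff.1 hvv).2] at hre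
  nlinarith [(Complex.pos_iff.1 hvv).1]

theorem charpoly_fromBlocks_neg_smul [DecidableEq m] [DecidableEq n] {A : Matrix m m ℝ}
    {B : Matrix n n ℝ} {C : Matrix m n ℝ} {D : Matrix n m ℝ} (hB : IsUnit B.det) (g : ℝ) :
    (fromBlocks (-g • A) (-g • C) D B).charpoly =
      (fromBlocks (-g • (A - C * B⁻¹ * D)) (-g • C) (-g • (B⁻¹ * D * (A - C * B⁻¹ * D)))
        (B - g • (B⁻¹ * D * C))).charpoly := by
  rw [Matrix.mul_assoc C]
  set P := B⁻¹ * D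
  have hBP : B * P = D := mul_nonsing_inv_cancel_left B D hB
  have hconj : fromBlocks (-g • A) (-g • C) D B = fromBlocks 1 0 (-P) 1 *
      (fromBlocks (-g • (A - C * P)) (-g • C) (-g • (P * (A - C * P))) (B - g • (P * C)) *
        fromBlocks 1 0 P 1) := by
    simp only [fromBlocks_multiply, Matrix.one_mul, Matrix.zero_mul, Matrix.mul_one,
      Matrix.mul_zero, Matrix.neg_mul, Matrix.mul_sub, Matrix.sub_mul,
      Matrix.mul_add, Matrix.mul_smul, Matrix.smul_mul, Matrix.mul_assoc, hBP, zero_add]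
    congr 1 <;> module
  have hinv :
      fromBlocks (1 : Matrix m m ℝ) 0 P (1 : Matrix n n ℝ) * fromBlocks 1 0 (-P) 1 = 1 := by
    simp [fromBlocks_multiply, fromBlocks_one]
  rw [hconj, charpoly_mul_comm, Matrix.mul_assoc, hinv, Matrix.mul_one, Matrix.mul_assoc]

end Matrix

theorem stmt_15_general {d₁ d₂ : ℕ}
    (A : Matrix (Fin d₁) (Fin d₁) ℝ) (B : Matrix (Fin d₂) (Fin d₂) ℝ)
    (C : Matrix (Fin d₁) (Fin d₂) ℝ)
    (hB : (-B).PosDef)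
    (hschur : (A - C * B⁻¹ * Cᵀ).PosDef) :
    ∃ γ₀ > (0 : ℝ), ∀ γ > γ₀, ∀ lam : ℂ,
      ((Matrix.fromBlocks ((-(1 / γ)) • A) ((-(1 / γ)) • C) Cᵀ B).map
          fun r : ℝ => (r : ℂ)).charpoly.IsRoot lam →
        lam.re < 0 := by
  have hBdet : IsUnit B.det := (isUnit_iff_isUnit_det B).1 (by simpa using hB.isUnit.neg)
  obtain ⟨g₀, hg₀, hK⟩ := exists_pos_dotProduct_fromBlocks_mulVec_neg hschur hB C
    (B⁻¹ * Cᵀ * (A - C * B⁻¹ * Cᵀ)) (B⁻¹ * Cᵀ * C)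
  refine ⟨1 / g₀, by positivity, fun γ hγ lam hlam => ?_⟩
  have hγ_pos : 0 < γ := lt_trans (by positivity) hγ
  have hconj := congrArg (Polynomial.map Complex.ofRealHom)
    (charpoly_fromBlocks_neg_smul (A := A) (C := C) (D := Cᵀ) hBdet (1 / γ))
  rw [← charpoly_map, ← charpoly_map] at hconj
  rw [show (fun r : ℝ => (r : ℂ)) = Complex.ofRealHom from rfl, hconj] at hlam
  exact re_neg_of_isRoot_charpoly_map_ofReal
    (hK _ (by positivity) ((one_div_lt hg₀ hγ_pos).1 hγ)) hlam

/-- Every strict local minimax point is a strict linearly stable point of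
`γ-GDA` for all sufficiently large `γ`: if `A`, `B` are symmetric, `B` is
negative definite and the Schur complement `A - C B⁻¹ Cᵀ` is positive
definite, then there is `γ₀ > 0` such that for every `γ > γ₀`, every complex
eigenvalue `λ` of `J_γ = [[-(1/γ)A, -(1/γ)C], [Cᵀ, B]]` has `Re λ < 0`. -/
theorem stmt_15 {d₁ d₂ : ℕ}
    (A : Matrix (Fin d₁) (Fin d₁) ℝ) (B : Matrix (Fin d₂) (Fin d₂) ℝ)
    (C : Matrix (Fin d₁) (Fin d₂) ℝ)
    (hA : A.IsSymm) (hB : (-B).PosDef)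
    (hschur : (A - C * B⁻¹ * Cᵀ).PosDef) :
    ∃ γ₀ > (0 : ℝ), ∀ γ > γ₀, ∀ lam : ℂ,
      ((Matrix.fromBlocks ((-(1 / γ)) • A) ((-(1 / γ)) • C) Cᵀ B).map
          fun r : ℝ => (r : ℂ)).charpoly.IsRoot lam →
        lam.re < 0 :=
  stmt_15_general A B C hB hschur
end

section
/- Let A ∈ ℝ^{d₁×d₁} and B ∈ ℝ^{d₂×d₂} be symmetric and C ∈ ℝ^{d₁×d₂}, with B invertible. Suppose that there exist arbitrarily large γ > 0 (i.e., for every γ₀ there is some γ > γ₀) such that every complex eigenvalue λ of J_γ = [[−(1/γ)A, −(1/γ)C], [Cᵀ, B]] satisfies Re(λ) < 0. Then B is negative definite and A − C B^{-1} Cᵀ is positive definite. (That is, up to stationary points where ∇²_{yy}f is degenerate, every point in the lim sup of the sets of strict linearly stable points of γ-GDA as γ → ∞ is a strict local minimax point.) -/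
/-!
Write `ε = 1/γ`. If a real polynomial `p` with positive leading coefficient has all its complex
roots in the open left half-plane, then `p t = lc p * ∏ ‖t - z‖` for `t ≥ 0`; every factor is
nondecreasing in `t` and at least `t`, so `p` is positive and nondecreasing on `[0, ∞)` and
`p t ≥ lc p * t ^ deg p`. These inequalities survive the limit `ε → 0⁺`.

Applied to `χ(J_ε)`, whose limit is `t ^ d₁ * χ(B)`, this gives `χ(B) t ≥ t ^ d₂`, so `B` has no
eigenvalue in `[0, ∞)`. For the Schur complement, rescale: `χ(J_ε)(ε t) = ε ^ d₁ * G_ε t` with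
`G_ε t = det [[t + A, C], [-Cᵀ, ε t - B]]`. Each `G_ε` is nondecreasing on `[0, ∞)` and
`G_ε 0 = G_0 0 > 0`, hence `G_0 t = det (-B) * χ(C B⁻¹ Cᵀ - A) t ≥ G_0 0 > 0` for `t ≥ 0`.
-/

open Matrix Polynomial Filter Topology

theorem le_of_frequently_nhdsWithin {X α : Type*} [TopologicalSpace X] [TopologicalSpace α]
    [Preorder α] [OrderClosedTopology α] {f g : X → α} {s : Set X} {a : X} (hf : Continuous f)
    (hg : Continuous g) (h : ∃ᶠ x in 𝓝[s] a, f x ≤ g x) : f a ≤ g a :=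
  isClosed_iff_frequently.mp (isClosed_le hf hg) a (h.filter_mono nhdsWithin_le_nhds)

theorem frequently_nhdsGT_zero_of_forall_exists_gt {P : ℝ → Prop}
    (h : ∀ γ₀ > (0 : ℝ), ∃ γ > γ₀, P (1 / γ)) : ∃ᶠ ε in 𝓝[>] 0, P ε := by
  refine tendsto_inv_atTop_nhdsGT_zero.frequently (frequently_atTop.mpr fun a ↦ ?_)
  obtain ⟨γ, hγ, hP⟩ := h (max a 1) (by positivity)
  exact ⟨γ, (le_max_left _ _).trans hγ.le, by rwa [← one_div]⟩

namespace Polynomial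

def IsHurwitz (p : ℝ[X]) : Prop :=
  ∀ z : ℂ, (p.map (algebraMap ℝ ℂ)).IsRoot z → z.re < 0

theorem eval_map_algebraMap_ofReal (p : ℝ[X]) (x : ℝ) :
    (p.map (algebraMap ℝ ℂ)).eval (x : ℂ) = ((p.eval x : ℝ) : ℂ) := by
  rw [eval_map]; exact eval₂_at_apply _ x

variable {p : ℝ[X]}

theorem IsHurwitz.eval_pos (hp : p.IsHurwitz) (hlc : 0 < p.leadingCoeff) {t : ℝ} (ht : 0 ≤ t) :
    0 < p.eval t := by
  rcases Nat.eq_zero_or_pos p.natDegree with hdeg | hdeg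
  · rw [eq_C_of_natDegree_eq_zero hdeg, eval_C]
    rwa [leadingCoeff, hdeg] at hlc
  by_contra! hneg
  obtain ⟨s, hs, hts⟩ := ((tendsto_atTop_of_leadingCoeff_nonneg p
    (natDegree_pos_iff_degree_pos.mp hdeg) hlc.le).eventually_gt_atTop 0
      |>.and (eventually_ge_atTop t)).exists
  obtain ⟨x, hx, hx0⟩ := intermediate_value_Icc hts p.continuous.continuousOn ⟨hneg, hs.le⟩
  have := hp x (by rw [IsRoot.def, eval_map_algebraMap_ofReal]; exact_mod_cast hx0)
  rw [Complex.ofReal_re] at this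
  linarith [hx.1]

theorem IsHurwitz.eval_eq_leadingCoeff_mul_prod (hp : p.IsHurwitz) (hlc : 0 < p.leadingCoeff)
    {t : ℝ} (ht : 0 ≤ t) :
    p.eval t =
      p.leadingCoeff * ((p.map (algebraMap ℝ ℂ)).roots.map fun z ↦ ‖(t : ℂ) - z‖).prod := by
  have := congrArg (fun r : ℂ[X] ↦ ‖r.eval (t : ℂ)‖)
    (C_leadingCoeff_mul_prod_multiset_X_sub_C (p := p.map (algebraMap ℝ ℂ))
      IsAlgClosed.card_roots_eq_natDegree)
  simp only [eval_mul, eval_C, eval_multiset_prod, Multiset.map_map, Function.comp_def, eval_sub,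
    eval_X, norm_mul] at this
  rw [eval_map_algebraMap_ofReal, leadingCoeff_map, Complex.norm_real, norm_algebraMap',
    Real.norm_of_nonneg hlc.le, Real.norm_of_nonneg (hp.eval_pos hlc ht).le] at this
  rw [← this, ← normHom_apply, map_multiset_prod, Multiset.map_map]
  rfl

theorem norm_ofReal_sub_le_of_re_nonpos {s t : ℝ} (hs : 0 ≤ s) (hst : s ≤ t) {z : ℂ}
    (hz : z.re ≤ 0) : ‖(s : ℂ) - z‖ ≤ ‖(t : ℂ) - z‖ := by
  rw [← sq_le_sq₀ (norm_nonneg _) (norm_nonneg _), Complex.sq_norm, Complex.sq_norm,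
    Complex.normSq_apply, Complex.normSq_apply]
  simp only [Complex.sub_re, Complex.ofReal_re, Complex.sub_im, Complex.ofReal_im]
  nlinarith

theorem IsHurwitz.monotoneOn_eval (hp : p.IsHurwitz) (hlc : 0 < p.leadingCoeff) :
    MonotoneOn (p.eval ·) (Set.Ici 0) := by
  intro s hs t ht hst
  show p.eval s ≤ p.eval t
  rw [hp.eval_eq_leadingCoeff_mul_prod hlc hs, hp.eval_eq_leadingCoeff_mul_prod hlc ht]
  refine mul_le_mul_of_nonneg_left (Multiset.prod_map_le_prod_map₀ _ _ (fun _ _ ↦ norm_nonneg _)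
    fun z hz ↦ ?_) hlc.le
  exact norm_ofReal_sub_le_of_re_nonpos hs hst (hp z (isRoot_of_mem_roots hz)).le

theorem IsHurwitz.leadingCoeff_mul_pow_le_eval (hp : p.IsHurwitz) (hlc : 0 < p.leadingCoeff)
    {t : ℝ} (ht : 0 ≤ t) : p.leadingCoeff * t ^ p.natDegree ≤ p.eval t := by
  have hcard : Multiset.card (p.map (algebraMap ℝ ℂ)).roots = p.natDegree := by
    rw [IsAlgClosed.card_roots_eq_natDegree, natDegree_map]
  rw [hp.eval_eq_leadingCoeff_mul_prod hlc ht, ← hcard, ← Multiset.prod_replicate,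
    ← Multiset.map_const']
  refine mul_le_mul_of_nonneg_left (Multiset.prod_map_le_prod_map₀ _ _ (fun _ _ ↦ ht)
    fun z hz ↦ ?_) hlc.le
  calc t ≤ ((t : ℂ) - z).re := by
        rw [Complex.sub_re, Complex.ofReal_re]; linarith [hp z (isRoot_of_mem_roots hz)]
    _ ≤ ‖(t : ℂ) - z‖ := Complex.re_le_norm _

end Polynomial

namespace Matrix

variable {m n : Type*} [Fintype m] [Fintype n] [DecidableEq m] [DecidableEq n]

theorem det_fromBlocks_smul_top {R : Type*} [CommRing R] (e : R) (P : Matrix m m R)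
    (Q : Matrix m n R) (S : Matrix n m R) (T : Matrix n n R) :
    (fromBlocks (e • P) (e • Q) S T).det = e ^ Fintype.card m * (fromBlocks P Q S T).det := by
  have : fromBlocks (e • P) (e • Q) S T = fromBlocks (e • 1) 0 0 1 * fromBlocks P Q S T := by
    simp [fromBlocks_multiply]
  rw [this, det_mul, det_fromBlocks_zero₂₁, det_smul, det_one, det_one, mul_one, mul_one]

theorem IsHermitian.neg_posDef_of_eval_charpoly_ne_zero {M : Matrix n n ℝ} (hM : M.IsHermitian)
    (h : ∀ t, 0 ≤ t → M.charpoly.eval t ≠ 0) : (-M).PosDef := by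
  refine hM.neg.posDef_iff_eigenvalues_pos.mpr fun i ↦ ?_
  by_contra! hle
  have hmem := hM.neg.eigenvalues_mem_spectrum_real i
  rw [← spectrum.neg_eq, Set.mem_neg, mem_spectrum_iff_isRoot_charpoly] at hmem
  exact h _ (neg_nonneg.mpr hle) hmem

theorem isHurwitz_charpoly_iff (M : Matrix n n ℝ) : M.charpoly.IsHurwitz ↔
    ∀ lam : ℂ, (M.map fun r : ℝ ↦ (r : ℂ)).charpoly.IsRoot lam → lam.re < 0 := by
  rw [IsHurwitz, ← charpoly_map]
  rfl

end Matrix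

section

variable {m n : Type*} [Fintype m] [Fintype n] [DecidableEq m] [DecidableEq n]
  (A : Matrix m m ℝ) (B : Matrix n n ℝ) (C : Matrix m n ℝ)

/-- The Jacobian `J_γ` of `γ`-GDA, with `ε` standing for `1 / γ`. -/
def gdaJacobian (ε : ℝ) : Matrix (m ⊕ n) (m ⊕ n) ℝ :=
  fromBlocks ((-ε) • A) ((-ε) • C) Cᵀ B

def gdaRescaledDet (ε t : ℝ) : ℝ :=
  (fromBlocks (t • 1 + A) C (-Cᵀ) ((ε * t) • 1 - B)).det

theorem continuous_eval_charpoly_gdaJacobian (t : ℝ) :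
    Continuous fun ε ↦ (gdaJacobian A B C ε).charpoly.eval t := by
  simp only [eval_charpoly, gdaJacobian]
  fun_prop

theorem continuous_gdaRescaledDet (t : ℝ) : Continuous fun ε ↦ gdaRescaledDet A B C ε t := by
  unfold gdaRescaledDet
  fun_prop

theorem charpoly_gdaJacobian_zero :
    (gdaJacobian A B C 0).charpoly = X ^ Fintype.card m * B.charpoly := by
  simp [gdaJacobian, charpoly_fromBlocks_zero₁₂, charpoly_zero]

theorem eval_charpoly_gdaJacobian_mul (ε t : ℝ) :
    (gdaJacobian A B C ε).charpoly.eval (ε * t) =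
      ε ^ Fintype.card m * gdaRescaledDet A B C ε t := by
  rw [eval_charpoly, gdaRescaledDet, ← Matrix.det_fromBlocks_smul_top]
  congr 1
  ext (i | i) (j | j) <;> simp [gdaJacobian, one_apply, diagonal_apply]

theorem gdaRescaledDet_zero_right (ε : ℝ) :
    gdaRescaledDet A B C ε 0 = gdaRescaledDet A B C 0 0 := by
  simp [gdaRescaledDet]

theorem gdaRescaledDet_zero_left (hB : IsUnit B.det) (t : ℝ) :
    gdaRescaledDet A B C 0 t = (-B).det * (C * B⁻¹ * Cᵀ - A).charpoly.eval t := by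
  have : Invertible (-B) := (-B).invertibleOfIsUnitDet (by simpa [det_neg] using hB)
  have hinv : (-B)⁻¹ = -B⁻¹ := inv_eq_left_inv (by rw [neg_mul_neg, nonsing_inv_mul _ hB])
  rw [gdaRescaledDet, zero_mul, zero_smul, zero_sub, det_fromBlocks₂₂, invOf_eq_nonsing_inv,
    eval_charpoly, hinv, Matrix.mul_neg, Matrix.mul_neg, Matrix.neg_mul, neg_neg,
    smul_one_eq_diagonal, scalar_apply, sub_sub_eq_add_sub]

variable {A B C}

theorem gdaRescaledDet_pos {ε : ℝ} (hε : 0 < ε) (h : (gdaJacobian A B C ε).charpoly.IsHurwitz)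
    {t : ℝ} (ht : 0 ≤ t) : 0 < gdaRescaledDet A B C ε t := by
  have := h.eval_pos (by simp [(charpoly_monic _).leadingCoeff]) (mul_nonneg hε.le ht)
  rw [eval_charpoly_gdaJacobian_mul] at this
  exact pos_of_mul_pos_right this (by positivity)

theorem monotoneOn_gdaRescaledDet {ε : ℝ} (hε : 0 < ε)
    (h : (gdaJacobian A B C ε).charpoly.IsHurwitz) :
    MonotoneOn (gdaRescaledDet A B C ε) (Set.Ici 0) := by
  intro s hs t ht hst
  have := h.monotoneOn_eval (by simp [(charpoly_monic _).leadingCoeff])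
    (mul_nonneg hε.le hs) (mul_nonneg hε.le ht) (mul_le_mul_of_nonneg_left hst hε.le)
  simp only [eval_charpoly_gdaJacobian_mul] at this
  exact le_of_mul_le_mul_left this (by positivity)

theorem neg_posDef_of_frequently_isHurwitz (hB : B.IsHermitian) (hBdet : IsUnit B.det)
    (h : ∃ᶠ ε in 𝓝[>] 0, (gdaJacobian A B C ε).charpoly.IsHurwitz) : (-B).PosDef := by
  refine hB.neg_posDef_of_eval_charpoly_ne_zero fun t ht ↦ ?_
  rcases ht.eq_or_lt with rfl | ht
  · rw [eval_charpoly, map_zero, zero_sub, det_neg]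
    exact mul_ne_zero (by simp) hBdet.ne_zero
  have hlim : t ^ (Fintype.card m + Fintype.card n) ≤ (gdaJacobian A B C 0).charpoly.eval t :=
    le_of_frequently_nhdsWithin (f := fun _ ↦ t ^ _)
      (g := fun ε ↦ (gdaJacobian A B C ε).charpoly.eval t) continuous_const
      (continuous_eval_charpoly_gdaJacobian A B C t)
      (h.mono fun ε hε ↦ by
        simpa [charpoly_natDegree_eq_dim, (charpoly_monic _).leadingCoeff] using
          hε.leadingCoeff_mul_pow_le_eval (by simp [(charpoly_monic _).leadingCoeff]) ht.le)
  rw [charpoly_gdaJacobian_zero, eval_mul, eval_pow, eval_X, pow_add] at hlim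
  exact (pow_pos ht _).trans_le (le_of_mul_le_mul_left hlim (by positivity)) |>.ne'

theorem posDef_sub_of_frequently_isHurwitz (hA : A.IsHermitian) (hB : B.IsHermitian)
    (hBdet : IsUnit B.det) (h : ∃ᶠ ε in 𝓝[>] 0, (gdaJacobian A B C ε).charpoly.IsHurwitz) :
    (A - C * B⁻¹ * Cᵀ).PosDef := by
  have hS : (C * B⁻¹ * Cᵀ - A).IsHermitian := by
    rw [← conjTranspose_eq_transpose_of_trivial]
    exact (isHermitian_mul_mul_conjTranspose C hB.inv).sub hA
  rw [← neg_sub]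
  refine hS.neg_posDef_of_eval_charpoly_ne_zero fun t ht ↦ ?_
  have hpos := h.and_eventually self_mem_nhdsWithin
  obtain ⟨ε, hε, hεpos⟩ := hpos.exists
  have h0 : 0 < gdaRescaledDet A B C 0 0 :=
    gdaRescaledDet_zero_right A B C ε ▸ gdaRescaledDet_pos hεpos hε le_rfl
  have hmono : gdaRescaledDet A B C 0 0 ≤ gdaRescaledDet A B C 0 t :=
    le_of_frequently_nhdsWithin (continuous_gdaRescaledDet A B C 0)
      (continuous_gdaRescaledDet A B C t)
      (hpos.mono fun ε ⟨hε, hεpos⟩ ↦ monotoneOn_gdaRescaledDet hεpos hε Set.self_mem_Ici ht ht)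
  have hG := h0.trans_le hmono
  rw [gdaRescaledDet_zero_left A B C hBdet] at hG
  exact right_ne_zero_of_mul hG.ne'

end

/-- Up to degenerate points, every point in the lim sup of the strict linearly
stable points of `γ-GDA` as `γ → ∞` is a strict local minimax point: if `A`,
`B` are symmetric, `B` is invertible, and there are arbitrarily large `γ > 0`
such that every complex eigenvalue of `J_γ = [[-(1/γ)A, -(1/γ)C], [Cᵀ, B]]`
has negative real part, then `B` is negative definite and the Schur complement
`A - C B⁻¹ Cᵀ` is positive definite. -/
theorem stmt_16 {d₁ d₂ : ℕ}
    (A : Matrix (Fin d₁) (Fin d₁) ℝ) (B : Matrix (Fin d₂) (Fin d₂) ℝ)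
    (C : Matrix (Fin d₁) (Fin d₂) ℝ)
    (hA : A.IsSymm) (hB : B.IsSymm) (hBdet : IsUnit B.det)
    (hstable : ∀ γ₀ > (0 : ℝ), ∃ γ > γ₀, ∀ lam : ℂ,
      ((Matrix.fromBlocks ((-(1 / γ)) • A) ((-(1 / γ)) • C) Cᵀ B).map
          fun r : ℝ => (r : ℂ)).charpoly.IsRoot lam →
        lam.re < 0) :
    (-B).PosDef ∧ (A - C * B⁻¹ * Cᵀ).PosDef := by
  have hfreq : ∃ᶠ ε in 𝓝[>] 0, (gdaJacobian A B C ε).charpoly.IsHurwitz :=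
    frequently_nhdsGT_zero_of_forall_exists_gt fun γ₀ hγ₀ ↦ (hstable γ₀ hγ₀).imp
      fun γ ⟨hγ, hroots⟩ ↦ ⟨hγ, (isHurwitz_charpoly_iff _).mpr hroots⟩
  exact ⟨neg_posDef_of_frequently_isHurwitz (isHermitian_iff_isSymm.mpr hB) hBdet hfreq,
    posDef_sub_of_frequently_isHurwitz (isHermitian_iff_isSymm.mpr hA)
      (isHermitian_iff_isSymm.mpr hB) hBdet hfreq⟩
end

section
/- Let Y ⊂ ℝ^{d₂} be a nonempty compact set and let f: ℝ^{d₁} × Y → ℝ be ℓ-gradient-Lipschitz (its gradient is ℓ-Lipschitz). Then the function φ(x) := max_{y ∈ Y} f(x,y) is ℓ-weakly convex: the function x ↦ φ(x) + (ℓ/2)‖x‖² is convex on ℝ^{d₁}. -/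
/-!
For each `y ∈ Y` the slice `g = f (·, y)` has an `ℓ`-Lipschitz derivative, so
`(g' x - g' x') (x - x') ≥ -ℓ ‖x - x'‖²`; adding `(ℓ/2) ‖x‖²` adds exactly `ℓ ‖x - x'‖²`, which makes
the derivative monotone and hence the function convex (restrict to lines). The function in the
theorem is the supremum over `y ∈ Y` of these convex functions, finite because `Y` is compact, and a
pointwise supremum of convex functions is convex.
-/

open Set

theorem convexOn_univ_of_fderiv_sub_apply_nonneg {E : Type*} [NormedAddCommGroup E]
    [NormedSpace ℝ E] {h : E → ℝ} (hh : Differentiable ℝ h)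
    (hmono : ∀ x x', 0 ≤ (fderiv ℝ h x - fderiv ℝ h x') (x - x')) :
    ConvexOn ℝ univ h := by
  refine ⟨convex_univ, fun x _ x' _ a b ha hb hab => ?_⟩
  set v := x' - x
  set φ : ℝ → ℝ := fun t => h (x + t • v)
  have hline : ∀ t : ℝ, HasDerivAt (fun t : ℝ => x + t • v) v t := fun t => by
    simpa using ((hasDerivAt_id t).smul_const v).const_add x
  have hφ : ∀ t, HasDerivAt φ (fderiv ℝ h (x + t • v) v) t := fun t =>
    (hh _).hasFDerivAt.comp_hasDerivAt t (hline t)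
  have hφ_mono : Monotone (deriv φ) := by
    intro s t hst
    rw [(hφ s).deriv, (hφ t).deriv, ← sub_nonneg]
    rcases hst.eq_or_lt with rfl | hlt
    · simp
    have key := hmono (x + t • v) (x + s • v)
    rw [show x + t • v - (x + s • v) = (t - s) • v by module, map_smul, smul_eq_mul,
      sub_apply] at key
    exact nonneg_of_mul_nonneg_right key (sub_pos.2 hlt)
  have hconv := (hφ_mono.convexOn_univ_of_deriv fun t => (hφ t).differentiableAt).2
    (mem_univ 0) (mem_univ 1) ha hb hab
  have hpoint : a • x + b • x' = x + b • v := by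
    rw [show a = 1 - b by linarith]; module
  simpa [φ, v, hpoint] using hconv

theorem convexOn_univ_add_half_mul_norm_sq {E : Type*} [NormedAddCommGroup E]
    [InnerProductSpace ℝ E] {g : E → ℝ} {ℓ : ℝ} (hg : Differentiable ℝ g)
    (hlip : ∀ x x', ‖fderiv ℝ g x - fderiv ℝ g x'‖ ≤ ℓ * ‖x - x'‖) :
    ConvexOn ℝ univ (fun x => g x + ℓ / 2 * ‖x‖ ^ 2) := by
  have hfd : ∀ x, HasFDerivAt (fun x => g x + ℓ / 2 * ‖x‖ ^ 2)
      (fderiv ℝ g x + (ℓ / 2) • (2 • innerSL ℝ x)) x := fun x =>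
    (hg x).hasFDerivAt.add ((hasStrictFDerivAt_norm_sq x).hasFDerivAt.const_mul (ℓ / 2))
  refine convexOn_univ_of_fderiv_sub_apply_nonneg (fun x => (hfd x).differentiableAt)
    fun x x' => ?_
  have hlow : -(ℓ * ‖x - x'‖ * ‖x - x'‖) ≤ (fderiv ℝ g x - fderiv ℝ g x') (x - x') :=
    neg_le_of_abs_le <| ((fderiv ℝ g x - fderiv ℝ g x').le_opNorm _).trans <|
      mul_le_mul_of_nonneg_right (hlip x x') (norm_nonneg _)
  rw [(hfd x).fderiv, (hfd x').fderiv]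
  have hexpand : (fderiv ℝ g x + (ℓ / 2) • (2 • innerSL ℝ x) -
      (fderiv ℝ g x' + (ℓ / 2) • (2 • innerSL ℝ x'))) (x - x') =
      (fderiv ℝ g x - fderiv ℝ g x') (x - x') + ℓ * ‖x - x'‖ ^ 2 := by
    simp only [sub_apply, add_apply, smul_apply, innerSL_apply_apply, smul_eq_mul, nsmul_eq_mul]
    rw [← real_inner_self_eq_norm_sq, inner_sub_left]
    ring
  rw [hexpand]; nlinarith

theorem norm_fderiv_slice_sub_le {E F : Type*} [NormedAddCommGroup E] [NormedSpace ℝ E]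
    [NormedAddCommGroup F] [NormedSpace ℝ F] {f : E × F → ℝ} (hf : Differentiable ℝ f)
    (x x' : E) (y : F) :
    ‖fderiv ℝ (fun x => f (x, y)) x - fderiv ℝ (fun x => f (x, y)) x'‖ ≤
      ‖fderiv ℝ f (x, y) - fderiv ℝ f (x', y)‖ := by
  have hslice : ∀ x, fderiv ℝ (fun x => f (x, y)) x =
      (fderiv ℝ f (x, y)).comp (ContinuousLinearMap.inl ℝ E F) := fun x =>
    ((hf _).hasFDerivAt.comp x (hasFDerivAt_prodMk_left x y)).fderiv
  rw [hslice, hslice, ← ContinuousLinearMap.sub_comp]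
  exact (ContinuousLinearMap.opNorm_comp_le _ _).trans <|
    mul_le_of_le_one_right (norm_nonneg _) (ContinuousLinearMap.norm_inl_le_one ℝ E F)

theorem convexOn_csSup_image {E ι : Type*} [AddCommMonoid E] [Module ℝ E] {s : Set E}
    {Y : Set ι} {F : E → ι → ℝ} (hs : Convex ℝ s) (hY : Y.Nonempty)
    (hF : ∀ y ∈ Y, ConvexOn ℝ s (fun x => F x y)) (hbdd : ∀ x ∈ s, BddAbove (F x '' Y)) :
    ConvexOn ℝ s (fun x => sSup (F x '' Y)) := by
  refine ⟨hs, fun x hx x' hx' a b ha hb hab => csSup_le (hY.image _) ?_⟩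
  rintro _ ⟨y, hy, rfl⟩
  calc F (a • x + b • x') y ≤ a • F x y + b • F x' y := (hF y hy).2 hx hx' ha hb hab
    _ ≤ a • sSup (F x '' Y) + b • sSup (F x' '' Y) := by
      gcongr
      · exact le_csSup (hbdd x hx) (mem_image_of_mem _ hy)
      · exact le_csSup (hbdd x' hx') (mem_image_of_mem _ hy)

theorem csSup_image_add_const {ι : Type*} {Y : Set ι} {g : ι → ℝ} (hY : Y.Nonempty)
    (hbdd : BddAbove (g '' Y)) (c : ℝ) :
    sSup ((fun y => g y + c) '' Y) = sSup (g '' Y) + c := by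
  rw [← image_image (· + c) g, ← OrderIso.addRight_apply c,
    (OrderIso.addRight c).map_csSup' (hY.image g) hbdd]
  rfl

/-- If `Y` is a nonempty compact set and `f : ℝ^{d₁} × Y → ℝ` has an
`ℓ`-Lipschitz gradient (over points whose second component lies in `Y`), then
`φ (x) := max_{y ∈ Y} f (x, y)` is `ℓ`-weakly convex, i.e.
`x ↦ φ x + (ℓ/2) ‖x‖²` is convex. -/
theorem stmt_17 {d₁ d₂ : ℕ}
    (Y : Set (EuclideanSpace ℝ (Fin d₂))) (hY : IsCompact Y) (hYne : Y.Nonempty)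
    (f : EuclideanSpace ℝ (Fin d₁) × EuclideanSpace ℝ (Fin d₂) → ℝ) (ℓ : ℝ)
    (hdiff : Differentiable ℝ f)
    (hgrad : ∀ z z' : EuclideanSpace ℝ (Fin d₁) × EuclideanSpace ℝ (Fin d₂),
      z.2 ∈ Y → z'.2 ∈ Y → ‖fderiv ℝ f z - fderiv ℝ f z'‖ ≤ ℓ * ‖z - z'‖) :
    ConvexOn ℝ Set.univ
      (fun x : EuclideanSpace ℝ (Fin d₁) =>
        sSup ((fun y => f (x, y)) '' Y) + (ℓ / 2) * ‖x‖ ^ 2) := by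
  have hbdd : ∀ x, BddAbove ((fun y => f (x, y)) '' Y) := fun x =>
    (hY.image (hdiff.continuous.comp (Continuous.prodMk_right x))).bddAbove
  have hslice : ∀ y ∈ Y, ConvexOn ℝ univ (fun x => f (x, y) + ℓ / 2 * ‖x‖ ^ 2) :=
    fun y hy => convexOn_univ_add_half_mul_norm_sq
      (hdiff.comp (differentiable_id.prodMk (differentiable_const y))) fun x x' =>
        (norm_fderiv_slice_sub_le hdiff x x' y).trans <| by
          simpa using hgrad (x, y) (x', y) hy hy
  have hsup := convexOn_csSup_image convex_univ hYne hslice fun x _ => by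
    simpa only [image_image, id] using (monotone_id.add_const _).map_bddAbove (hbdd x)
  simpa only [csSup_image_add_const hYne (hbdd _)] using hsup
end

section
/- Let f: ℝ^{d₁} × Y → ℝ be ℓ-smooth and L-Lipschitz with Y compact, define φ(x) := max_{y ∈ Y} f(x,y) and its Moreau envelope φ_{1/2ℓ}(x) := min_{x'} [φ(x') + ℓ‖x − x'‖²], and assume φ is bounded below. Fix ε ≥ 0, T ∈ ℕ, γ > 0, and step size η = γ/√(T+1). Let (x_t)_{t=0}^{T} be any sequence such that for each t there exists y_t ∈ Y with f(x_t, y_t) ≥ max_{y∈Y} f(x_t, y) − ε and x_{t+1} = x_t − η ∇_x f(x_t, y_t). Then the average of the squared Moreau-envelope gradient norms satisfies (1/(T+1)) ∑_{t=0}^{T} ‖∇φ_{1/2ℓ}(x_t)‖² ≤ 2·[(φ_{1/2ℓ}(x_0) − min_x φ(x)) + ℓ L² γ²]/(γ√(T+1)) + 4ℓε. -/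
/-!
Each `f (·, y)` has an `ℓ`-Lipschitz gradient, so `f (·, y) + ℓ/2 ‖·‖²` is convex, and hence so is
`φ + ℓ/2 ‖·‖²`. Consequently `u ↦ φ u + ℓ ‖x - u‖²` is `ℓ`-strongly convex; it has a minimizer
`x̂` (the proximal point), and the Moreau envelope is differentiable with
`∇φ_{1/2ℓ} x = 2ℓ (x - x̂)`. Testing the envelope at `x_{t+1}` against `x̂_t`, and combining the
descent lemma for `f (·, y_t)` with the `ε`-optimality of `y_t` and the strong convexity at
`x̂_t`, gives the one-step decrease
`η/2 ‖∇φ_{1/2ℓ} x_t‖² ≤ φ_{1/2ℓ} x_t - φ_{1/2ℓ} x_{t+1} + 2ℓηε + ℓη²L²`,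
which telescopes.
-/

open Set Filter Topology
open scoped RealInnerProductSpace

theorem convexOn_univ_of_forall_add_apply_sub_le {E : Type*} [AddCommGroup E] [Module ℝ E]
    {h : E → ℝ} (D : E → E →ₗ[ℝ] ℝ) (hD : ∀ a b, h a + D a (b - a) ≤ h b) :
    ConvexOn ℝ univ h := by
  refine ⟨convex_univ, fun x _ y _ s t hs ht hst => ?_⟩
  set z := s • x + t • y
  have hzero : s • (x - z) + t • (y - z) = 0 := by
    have : s • (x - z) + t • (y - z) = z - (s + t) • z := by
      simp only [z, smul_sub, add_smul]; abel
    rw [this, hst, one_smul, sub_self]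
  have hx := mul_le_mul_of_nonneg_left (hD z x) hs
  have hy := mul_le_mul_of_nonneg_left (hD z y) ht
  have hDz : s * D z (x - z) + t * D z (y - z) = 0 := by
    rw [← smul_eq_mul, ← smul_eq_mul, ← map_smul, ← map_smul, ← map_add, hzero, map_zero]
  have hsplit : s * h z + t * h z = h z := by rw [← add_mul, hst, one_mul]
  simp only [smul_eq_mul]
  linarith

section LipschitzGradient

variable {E : Type*} [NormedAddCommGroup E] {g : E → ℝ} {c : ℝ}

theorem add_fderiv_sub_sq_le_of_lipschitz_fderiv [NormedSpace ℝ E] (hg : Differentiable ℝ g)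
    (hc : ∀ u v, ‖fderiv ℝ g u - fderiv ℝ g v‖ ≤ c * ‖u - v‖) (a b : E) :
    g a + fderiv ℝ g a (b - a) - c / 2 * ‖b - a‖ ^ 2 ≤ g b := by
  obtain ⟨v, rfl⟩ : ∃ v, b = a + v := ⟨b - a, (add_sub_cancel a b).symm⟩
  rw [add_sub_cancel_left]
  let D : ℝ → ℝ := fun t => fderiv ℝ g (a + t • v) v - fderiv ℝ g a v + c * t * ‖v‖ ^ 2
  -- the gap between `g` and its quadratic lower model along `t ↦ a + t • v` grows for `t ≥ 0`
  let h : ℝ → ℝ := fun t => g (a + t • v) - t * fderiv ℝ g a v + c / 2 * t ^ 2 * ‖v‖ ^ 2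
  have hD : ∀ t, HasDerivAt h (D t) t := by
    intro t
    have hpath : HasDerivAt (fun s : ℝ => a + s • v) v t := by
      simpa using ((hasDerivAt_id t).smul_const v).const_add a
    have := (((hg _).hasFDerivAt.comp_hasDerivAt t hpath).sub
      ((hasDerivAt_id t).mul_const (fderiv ℝ g a v))).add
      (((hasDerivAt_pow 2 t).const_mul (c / 2)).mul_const (‖v‖ ^ 2))
    exact this.congr_deriv (by simp only [D]; ring)
  have hD_nonneg : ∀ t, 0 ≤ t → 0 ≤ D t := by
    intro t ht
    have hbound : |fderiv ℝ g (a + t • v) v - fderiv ℝ g a v| ≤ c * t * ‖v‖ ^ 2 :=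
      calc |fderiv ℝ g (a + t • v) v - fderiv ℝ g a v|
          ≤ ‖fderiv ℝ g (a + t • v) - fderiv ℝ g a‖ * ‖v‖ :=
            (fderiv ℝ g (a + t • v) - fderiv ℝ g a).le_opNorm v
        _ ≤ c * ‖t • v‖ * ‖v‖ := by
            gcongr
            simpa using hc (a + t • v) a
        _ = c * t * ‖v‖ ^ 2 := by rw [norm_smul, Real.norm_of_nonneg ht]; ring
    linarith [(abs_le.mp hbound).1]
  have hmono : MonotoneOn h (Ici 0) :=
    monotoneOn_of_hasDerivWithinAt_nonneg (convex_Ici 0)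
      (fun t _ => (hD t).continuousAt.continuousWithinAt) (fun t _ => (hD t).hasDerivWithinAt)
      fun t ht => hD_nonneg t (interior_subset ht)
  have := hmono (mem_Ici.2 le_rfl) (mem_Ici.2 zero_le_one) zero_le_one
  simp only [h] at this
  norm_num at this
  linarith

theorem convexOn_add_half_mul_sq_norm_of_lipschitz_fderiv [InnerProductSpace ℝ E]
    (hg : Differentiable ℝ g)
    (hc : ∀ u v, ‖fderiv ℝ g u - fderiv ℝ g v‖ ≤ c * ‖u - v‖) :
    ConvexOn ℝ univ fun x => g x + c / 2 * ‖x‖ ^ 2 := by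
  refine convexOn_univ_of_forall_add_apply_sub_le
    (fun a => ((fderiv ℝ g a + c • innerSL ℝ a : E →L[ℝ] ℝ) : E →ₗ[ℝ] ℝ)) fun a b => ?_
  have hdesc := add_fderiv_sub_sq_le_of_lipschitz_fderiv hg hc a b
  have hsq : ‖b‖ ^ 2 = ‖a‖ ^ 2 + 2 * ⟪a, b - a⟫ + ‖b - a‖ ^ 2 := by
    simpa using norm_add_sq_real a (b - a)
  simp only [ContinuousLinearMap.coe_coe, add_apply, smul_apply, innerSL_apply_apply, smul_eq_mul,
    hsq]
  linarith

theorem LipschitzWith.norm_gradient_le [InnerProductSpace ℝ E] [CompleteSpace E] {K : NNReal}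
    (hg : LipschitzWith K g) (x : E) : ‖gradient g x‖ ≤ K := by
  rw [← (InnerProductSpace.toDual ℝ E).norm_map, toDual_gradient]
  exact norm_fderiv_le_of_lipschitz ℝ hg

end LipschitzGradient

section Partial

variable {E F : Type*} [NormedAddCommGroup E] [NormedAddCommGroup F] {f : E × F → ℝ} {y : F}

theorem norm_prodMk_sub_prodMk_right (u w : E) (y : F) : ‖(u, y) - (w, y)‖ = ‖u - w‖ := by
  simp only [← dist_eq_norm, dist_prod_same_right]

theorem lipschitzWith_comp_prodMk_left {L : ℝ}
    (hL : ∀ u w : E, |f (u, y) - f (w, y)| ≤ L * ‖(u, y) - (w, y)‖) :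
    LipschitzWith (Real.nnabs L) fun u => f (u, y) :=
  LipschitzWith.of_dist_le_mul fun u w => by
    rw [Real.dist_eq, Real.coe_nnabs, dist_eq_norm]
    calc |f (u, y) - f (w, y)| ≤ L * ‖u - w‖ := by
          simpa [norm_prodMk_sub_prodMk_right] using hL u w
      _ ≤ |L| * ‖u - w‖ := by gcongr; exact le_abs_self L

theorem norm_fderiv_comp_prodMk_left_sub_le [NormedSpace ℝ E] [NormedSpace ℝ F]
    (hf : Differentiable ℝ f) {c : ℝ}
    (hc : ∀ u w : E, ‖fderiv ℝ f (u, y) - fderiv ℝ f (w, y)‖ ≤ c * ‖(u, y) - (w, y)‖) (u w : E) :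
    ‖fderiv ℝ (fun u => f (u, y)) u - fderiv ℝ (fun u => f (u, y)) w‖ ≤ c * ‖u - w‖ := by
  have hpartial : ∀ u, fderiv ℝ (fun u => f (u, y)) u
      = (fderiv ℝ f (u, y)).comp (ContinuousLinearMap.inl ℝ E F) := fun u =>
    ((hf (u, y)).hasFDerivAt.comp u (hasFDerivAt_prodMk_left u y)).fderiv
  rw [hpartial, hpartial, ← ContinuousLinearMap.sub_comp]
  calc _ ≤ ‖fderiv ℝ f (u, y) - fderiv ℝ f (w, y)‖ * ‖ContinuousLinearMap.inl ℝ E F‖ :=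
        ContinuousLinearMap.opNorm_comp_le _ _
    _ ≤ ‖fderiv ℝ f (u, y) - fderiv ℝ f (w, y)‖ * 1 := by
        gcongr; exact ContinuousLinearMap.norm_inl_le_one ℝ E F
    _ ≤ c * ‖u - w‖ := by rw [mul_one, ← norm_prodMk_sub_prodMk_right u w y]; exact hc u w

end Partial

section PointwiseMax

variable {ι α : Type*} {s : Set ι}

theorem convexOn_univ_of_isGreatest_image [AddCommGroup α] [Module ℝ α] {F : ι → α → ℝ}
    {φ : α → ℝ} (hF : ∀ i ∈ s, ConvexOn ℝ univ (F i))
    (hφ : ∀ x, IsGreatest ((fun i => F i x) '' s) (φ x)) :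
    ConvexOn ℝ univ φ := by
  refine ⟨convex_univ, fun x _ y _ a b ha hb hab => ?_⟩
  obtain ⟨i, hi, hiz⟩ := (hφ (a • x + b • y)).1
  rw [← hiz]
  calc F i (a • x + b • y) ≤ a • F i x + b • F i y := (hF i hi).2 trivial trivial ha hb hab
    _ ≤ a • φ x + b • φ y := by gcongr <;> exact (hφ _).2 ⟨i, hi, rfl⟩

theorem lipschitzWith_of_isGreatest_image [PseudoMetricSpace α] {F : ι → α → ℝ} {φ : α → ℝ}
    {K : NNReal} (hF : ∀ i ∈ s, LipschitzWith K (F i))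
    (hφ : ∀ x, IsGreatest ((fun i => F i x) '' s) (φ x)) :
    LipschitzWith K φ :=
  LipschitzWith.of_le_add_mul K fun x x' => by
    obtain ⟨i, hi, hix⟩ := (hφ x).1
    rw [← hix]
    calc F i x ≤ F i x' + K * dist x x' := (hF i hi).le_add_mul x x'
      _ ≤ φ x' + K * dist x x' := by gcongr; exact (hφ x').2 ⟨i, hi, rfl⟩

theorem convexOn_add_half_mul_sq_norm_of_isGreatest_image {E : Type*} [NormedAddCommGroup E]
    [InnerProductSpace ℝ E] {F : ι → E → ℝ} {φ : E → ℝ} {c : ℝ}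
    (hφ : ∀ x, IsGreatest ((fun i => F i x) '' s) (φ x)) (hF : ∀ i ∈ s, Differentiable ℝ (F i))
    (hc : ∀ i ∈ s, ∀ u v, ‖fderiv ℝ (F i) u - fderiv ℝ (F i) v‖ ≤ c * ‖u - v‖) :
    ConvexOn ℝ univ fun x => φ x + c / 2 * ‖x‖ ^ 2 :=
  convexOn_univ_of_isGreatest_image (F := fun i x => F i x + c / 2 * ‖x‖ ^ 2)
    (fun i hi => convexOn_add_half_mul_sq_norm_of_lipschitz_fderiv (hF i hi) (hc i hi)) fun x => by
      simpa [image_image] using (monotone_id.add_const (c / 2 * ‖x‖ ^ 2)).map_isGreatest (hφ x)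

theorem sub_add_inner_gradient_le_of_isGreatest_image {E : Type*} [NormedAddCommGroup E]
    [InnerProductSpace ℝ E] [CompleteSpace E] {F : ι → E → ℝ} {φ : E → ℝ} {c : ℝ}
    (hφ : ∀ x, IsGreatest ((fun i => F i x) '' s) (φ x)) {i : ι} (hi : i ∈ s)
    (hF : Differentiable ℝ (F i)) (hc : ∀ u v, ‖fderiv ℝ (F i) u - fderiv ℝ (F i) v‖ ≤ c * ‖u - v‖)
    {a : E} {ε : ℝ} (hε : ∀ j ∈ s, F j a ≤ F i a + ε) (u : E) :
    φ a - ε + ⟪gradient (F i) a, u - a⟫ - c / 2 * ‖u - a‖ ^ 2 ≤ φ u := by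
  obtain ⟨j, hj, hja⟩ := (hφ a).1
  have hdesc := add_fderiv_sub_sq_le_of_lipschitz_fderiv hF hc a u
  rw [← inner_gradient_left] at hdesc
  linarith [hε j hj, (hφ u).2 ⟨i, hi, rfl⟩]

end PointwiseMax

theorem StrongConvexOn.add_sq_le_of_isMinOn {E : Type*} [NormedAddCommGroup E] [NormedSpace ℝ E]
    {s : Set E} {m : ℝ} {g : E → ℝ} {p u : E} (hg : StrongConvexOn s m g) (hp : IsMinOn g s p)
    (hps : p ∈ s) (hu : u ∈ s) : g p + m / 2 * ‖u - p‖ ^ 2 ≤ g u := by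
  -- compare `g p` with `g (t • u + (1 - t) • p)`, divide by `t` and let `t → 0⁺`
  have hlim : Tendsto (fun t : ℝ => g p + (1 - t) * (m / 2 * ‖u - p‖ ^ 2)) (𝓝[>] 0)
      (𝓝 (g p + m / 2 * ‖u - p‖ ^ 2)) := by
    have : Continuous fun t : ℝ => g p + (1 - t) * (m / 2 * ‖u - p‖ ^ 2) := by fun_prop
    simpa using (this.tendsto 0).mono_left nhdsWithin_le_nhds
  refine le_of_tendsto hlim ?_
  filter_upwards [Ioo_mem_nhdsGT one_pos] with t ht
  have hmem := hg.1 hu hps ht.1.le (sub_nonneg.2 ht.2.le) (add_sub_cancel t 1)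
  have hconv := hg.2 hu hps ht.1.le (sub_nonneg.2 ht.2.le) (add_sub_cancel t 1)
  have hmin : g p ≤ g (t • u + (1 - t) • p) := hp hmem
  simp only [smul_eq_mul] at hconv
  have key : t * (g p + (1 - t) * (m / 2 * ‖u - p‖ ^ 2)) ≤ t * g u := by linarith
  exact le_of_mul_le_mul_left key ht.1

section Moreau

variable {E : Type*} [NormedAddCommGroup E] {φ : E → ℝ} {ℓ : ℝ}

noncomputable def moreauEnvelope (φ : E → ℝ) (ℓ : ℝ) (x : E) : ℝ :=
  sInf (range fun x' => φ x' + ℓ * ‖x - x'‖ ^ 2)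

theorem moreauEnvelope_le (hbd : BddBelow (range φ)) (hℓ : 0 ≤ ℓ) (x u : E) :
    moreauEnvelope φ ℓ x ≤ φ u + ℓ * ‖x - u‖ ^ 2 := by
  obtain ⟨m, hm⟩ := hbd
  refine csInf_le ⟨m, forall_mem_range.2 fun v => ?_⟩ (mem_range_self u)
  exact le_add_of_le_of_nonneg (hm (mem_range_self v)) (by positivity)

theorem sInf_range_le_moreauEnvelope (hbd : BddBelow (range φ)) (hℓ : 0 ≤ ℓ) (x : E) :
    sInf (range φ) ≤ moreauEnvelope φ ℓ x :=
  le_csInf (range_nonempty _) <| forall_mem_range.2 fun u =>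
    le_add_of_le_of_nonneg (csInf_le hbd (mem_range_self u)) (by positivity)

theorem moreauEnvelope_eq_of_isMinOn {x p : E}
    (hp : IsMinOn (fun u => φ u + ℓ * ‖x - u‖ ^ 2) univ p) :
    moreauEnvelope φ ℓ x = φ p + ℓ * ‖x - p‖ ^ 2 :=
  IsLeast.csInf_eq ⟨mem_range_self p, forall_mem_range.2 fun u => hp (mem_univ u)⟩

theorem exists_isMinOn_add_mul_norm_sub_sq [ProperSpace E] (hφ : Continuous φ)
    (hbd : BddBelow (range φ)) (hℓ : 0 < ℓ) (x : E) :
    ∃ p, IsMinOn (fun u => φ u + ℓ * ‖x - u‖ ^ 2) univ p := by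
  obtain ⟨m, hm⟩ := hbd
  have hsublevel : Bornology.IsBounded {u | φ u + ℓ * ‖x - u‖ ^ 2 ≤ φ x + ℓ * ‖x - x‖ ^ 2} := by
    refine (Metric.isBounded_closedBall (x := x) (r := √((φ x - m) / ℓ))).subset fun u hu => ?_
    rw [mem_ofPred_eq, sub_self, norm_zero] at hu
    rw [Metric.mem_closedBall, dist_comm, dist_eq_norm]
    refine Real.le_sqrt_of_sq_le ((le_div_iff₀ hℓ).2 ?_)
    linarith [hm (mem_range_self u)]
  obtain ⟨p, hp⟩ := (show Continuous fun u => φ u + ℓ * ‖x - u‖ ^ 2 by fun_prop)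
    |>.exists_forall_le_of_isBounded x hsublevel
  exact ⟨p, fun u _ => hp u⟩

variable [InnerProductSpace ℝ E]

theorem ConvexOn.strongConvexOn_add_mul_norm_sub_sq
    (hφ : ConvexOn ℝ univ fun x => φ x + ℓ / 2 * ‖x‖ ^ 2) (x : E) :
    StrongConvexOn univ ℓ fun u => φ u + ℓ * ‖x - u‖ ^ 2 := by
  rw [strongConvexOn_iff_convex]
  refine ((hφ.add ((innerₛₗ ℝ ((-(2 * ℓ)) • x)).convexOn convex_univ)).add_const
    (ℓ * ‖x‖ ^ 2)).congr fun u _ => ?_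
  simp only [Pi.add_apply, innerₛₗ_apply_apply, real_inner_smul_left, norm_sub_sq_real]
  ring

theorem add_mul_norm_sub_sq_le_of_isMinOn (hφ : ConvexOn ℝ univ fun x => φ x + ℓ / 2 * ‖x‖ ^ 2)
    {x p : E} (hp : IsMinOn (fun u => φ u + ℓ * ‖x - u‖ ^ 2) univ p) (u : E) :
    φ p + ℓ * ‖x - p‖ ^ 2 + ℓ / 2 * ‖u - p‖ ^ 2 ≤ φ u + ℓ * ‖x - u‖ ^ 2 :=
  (hφ.strongConvexOn_add_mul_norm_sub_sq x).add_sq_le_of_isMinOn hp (mem_univ p) (mem_univ u)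

theorem norm_sub_le_two_mul_of_isMinOn (hφ : ConvexOn ℝ univ fun x => φ x + ℓ / 2 * ‖x‖ ^ 2)
    (hℓ : 0 < ℓ) {x y p q : E} (hp : IsMinOn (fun u => φ u + ℓ * ‖x - u‖ ^ 2) univ p)
    (hq : IsMinOn (fun u => φ u + ℓ * ‖y - u‖ ^ 2) univ q) :
    ‖p - q‖ ≤ 2 * ‖x - y‖ := by
  have hpq := add_mul_norm_sub_sq_le_of_isMinOn hφ hp q
  have hqp := add_mul_norm_sub_sq_le_of_isMinOn hφ hq p
  have hid : ‖x - q‖ ^ 2 + ‖y - p‖ ^ 2 - ‖x - p‖ ^ 2 - ‖y - q‖ ^ 2 = 2 * ⟪x - y, p - q⟫ := by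
    simp only [norm_sub_sq_real, inner_sub_left, inner_sub_right]
    ring
  have hsq : ‖p - q‖ ^ 2 ≤ 2 * ⟪x - y, p - q⟫ := by
    rw [norm_sub_rev q p] at hpq
    nlinarith
  nlinarith [real_inner_le_norm (x - y) (p - q), norm_nonneg (p - q), norm_nonneg (x - y)]

theorem hasGradientAt_of_abs_sub_inner_le [CompleteSpace E] {f : E → ℝ} {g a : E} {C : ℝ}
    (h : ∀ b, |f b - f a - ⟪g, b - a⟫| ≤ C * ‖b - a‖ ^ 2) : HasGradientAt f g a := by
  rw [hasGradientAt_iff_isLittleO]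
  have hsq : (fun b => ‖b - a‖ ^ 2) =o[𝓝 a] fun b => b - a :=
    (Asymptotics.isLittleO_norm_pow_id one_lt_two).comp_tendsto
      (tendsto_sub_nhds_zero_iff.2 tendsto_id)
  refine (Asymptotics.IsBigO.of_bound C (Eventually.of_forall fun b => ?_)).trans_isLittleO hsq
  simpa using h b

theorem hasGradientAt_moreauEnvelope [CompleteSpace E]
    (hφ : ConvexOn ℝ univ fun x => φ x + ℓ / 2 * ‖x‖ ^ 2) (hbd : BddBelow (range φ)) (hℓ : 0 < ℓ)
    {p : E → E} (hp : ∀ x, IsMinOn (fun u => φ u + ℓ * ‖x - u‖ ^ 2) univ (p x)) (x : E) :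
    HasGradientAt (moreauEnvelope φ ℓ) ((2 * ℓ) • (x - p x)) x := by
  refine hasGradientAt_of_abs_sub_inner_le (C := 3 * ℓ) fun y => abs_le.2 ⟨?_, ?_⟩
  · have hx := moreauEnvelope_le hbd hℓ.le x (p y)
    have hy := moreauEnvelope_eq_of_isMinOn (hp y)
    have hprox := norm_sub_le_two_mul_of_isMinOn hφ hℓ (hp y) (hp x)
    have hcs := real_inner_le_norm (p y - p x) (y - x)
    have hexp : ‖x - p y‖ ^ 2 = ‖y - p y‖ ^ 2 - 2 * ⟪y - p y, y - x⟫ + ‖y - x‖ ^ 2 := by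
      rw [← norm_sub_sq_real]; congr 2; abel
    have hin : ⟪y - p y, y - x⟫ - ⟪x - p x, y - x⟫ = ‖y - x‖ ^ 2 - ⟪p y - p x, y - x⟫ := by
      rw [← inner_sub_left, ← real_inner_self_eq_norm_sq, ← inner_sub_left]
      congr 1
      abel
    have hbound : ⟪p y - p x, y - x⟫ ≤ 2 * ‖y - x‖ ^ 2 := by
      nlinarith [mul_le_mul_of_nonneg_right hprox (norm_nonneg (y - x))]
    have hbound' := mul_le_mul_of_nonneg_left hbound hℓ.le
    have hin' := congrArg (ℓ * ·) hin
    rw [hexp] at hx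
    rw [real_inner_smul_left]
    linarith
  · have hy := moreauEnvelope_le hbd hℓ.le y (p x)
    have hx := moreauEnvelope_eq_of_isMinOn (hp x)
    have hexp : ‖y - p x‖ ^ 2 = ‖x - p x‖ ^ 2 + 2 * ⟪x - p x, y - x⟫ + ‖y - x‖ ^ 2 := by
      rw [← norm_add_sq_real]; congr 2; abel
    rw [hexp] at hy
    rw [real_inner_smul_left]
    nlinarith [norm_nonneg (y - x)]

theorem moreauEnvelope_sub_smul_le (hφ : ConvexOn ℝ univ fun x => φ x + ℓ / 2 * ‖x‖ ^ 2)
    (hbd : BddBelow (range φ)) (hℓ : 0 < ℓ) {x p g : E} {ε η K : ℝ} (hη : 0 ≤ η)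
    (hp : IsMinOn (fun u => φ u + ℓ * ‖x - u‖ ^ 2) univ p)
    (hg : ∀ u, φ x - ε + ⟪g, u - x⟫ - ℓ / 2 * ‖u - x‖ ^ 2 ≤ φ u) (hgK : ‖g‖ ≤ K) :
    η / 2 * ‖(2 * ℓ) • (x - p)‖ ^ 2 ≤ moreauEnvelope φ ℓ x - moreauEnvelope φ ℓ (x - η • g) +
      (2 * ℓ * η * ε + ℓ * η ^ 2 * K ^ 2) := by
  have hgrowth := add_mul_norm_sub_sq_le_of_isMinOn hφ hp x
  have hsub := hg p
  rw [sub_self, norm_zero] at hgrowth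
  rw [norm_sub_rev p x, ← neg_sub x p, inner_neg_right] at hsub
  have hinner : ℓ * ‖x - p‖ ^ 2 - ε ≤ ⟪g, x - p⟫ := by nlinarith
  have hnext := moreauEnvelope_le hbd hℓ.le (x - η • g) p
  have hexp : ‖x - η • g - p‖ ^ 2 = ‖x - p‖ ^ 2 - 2 * η * ⟪g, x - p⟫ + η ^ 2 * ‖g‖ ^ 2 := by
    rw [sub_right_comm, norm_sub_sq_real, real_inner_smul_right, norm_smul, mul_pow,
      Real.norm_eq_abs, sq_abs, real_inner_comm]
    ring
  have hscaled := mul_le_mul_of_nonneg_left hinner (by positivity : 0 ≤ 2 * ℓ * η)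
  have hgK' := mul_le_mul_of_nonneg_left (pow_le_pow_left₀ (norm_nonneg g) hgK 2)
    (by positivity : 0 ≤ ℓ * η ^ 2)
  rw [moreauEnvelope_eq_of_isMinOn hp, norm_smul, mul_pow, Real.norm_eq_abs, sq_abs]
  nlinarith

end Moreau

theorem avg_le_of_forall_half_mul_le_sub_add {G Φ : ℕ → ℝ} {η c m : ℝ} (hη : 0 < η) (T : ℕ)
    (hstep : ∀ t, η / 2 * G t ≤ Φ t - Φ (t + 1) + c) (hm : m ≤ Φ (T + 1)) :
    1 / (T + 1 : ℝ) * ∑ t ∈ Finset.range (T + 1), G t ≤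
      2 * (Φ 0 - m) / (η * (T + 1)) + 2 * c / η := by
  have hsum : η / 2 * ∑ t ∈ Finset.range (T + 1), G t ≤ Φ 0 - Φ (T + 1) + (T + 1) * c := by
    rw [Finset.mul_sum]
    calc _ ≤ ∑ t ∈ Finset.range (T + 1), (Φ t - Φ (t + 1) + c) :=
          Finset.sum_le_sum fun t _ => hstep t
      _ = _ := by
          rw [Finset.sum_add_distrib, Finset.sum_range_sub', Finset.sum_const, Finset.card_range,
            nsmul_eq_mul]
          push_cast
          ring
  calc 1 / (T + 1 : ℝ) * ∑ t ∈ Finset.range (T + 1), G t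
      = (η / 2 * ∑ t ∈ Finset.range (T + 1), G t) * (2 / (η * (T + 1))) := by
        field_simp
    _ ≤ (Φ 0 - m + (T + 1) * c) * (2 / (η * (T + 1))) := by gcongr; linarith
    _ = _ := by field_simp

theorem stmt_18_general {d₁ d₂ : ℕ}
    (Y : Set (EuclideanSpace ℝ (Fin d₂))) (hY : IsCompact Y) (hYne : Y.Nonempty)
    (f : EuclideanSpace ℝ (Fin d₁) × EuclideanSpace ℝ (Fin d₂) → ℝ)
    (ℓ L : ℝ) (hℓ : 0 < ℓ)
    (hdiff : Differentiable ℝ f)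
    (hsmooth : ∀ z z' : EuclideanSpace ℝ (Fin d₁) × EuclideanSpace ℝ (Fin d₂),
      z.2 ∈ Y → z'.2 ∈ Y → ‖fderiv ℝ f z - fderiv ℝ f z'‖ ≤ ℓ * ‖z - z'‖)
    (hLip : ∀ z z' : EuclideanSpace ℝ (Fin d₁) × EuclideanSpace ℝ (Fin d₂),
      z.2 ∈ Y → z'.2 ∈ Y → |f z - f z'| ≤ L * ‖z - z'‖)
    (φ φM : EuclideanSpace ℝ (Fin d₁) → ℝ)
    (hφ : φ = fun x => sSup ((fun y => f (x, y)) '' Y))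
    (hφM : φM = fun x => sInf (Set.range fun x' => φ x' + ℓ * ‖x - x'‖ ^ 2))
    (hbd : BddBelow (Set.range φ))
    (ε γ : ℝ) (hγ : 0 < γ) (T : ℕ)
    (x : ℕ → EuclideanSpace ℝ (Fin d₁)) (y : ℕ → EuclideanSpace ℝ (Fin d₂))
    (hyY : ∀ t, y t ∈ Y)
    (horacle : ∀ t, ∀ y' ∈ Y, f (x t, y') ≤ f (x t, y t) + ε)
    (hupdate : ∀ t, x (t + 1) =
      x t - (γ / Real.sqrt (T + 1)) • gradient (fun x' => f (x', y t)) (x t)) :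
    (1 / (T + 1 : ℝ)) * ∑ t ∈ Finset.range (T + 1), ‖gradient φM (x t)‖ ^ 2 ≤
      2 * ((φM (x 0) - sInf (Set.range φ)) + ℓ * L ^ 2 * γ ^ 2) /
          (γ * Real.sqrt (T + 1)) +
        4 * ℓ * ε := by
  obtain rfl : φM = moreauEnvelope φ ℓ := hφM
  have hφmax : ∀ x, IsGreatest ((fun y => f (x, y)) '' Y) (φ x) := fun x => by
    rw [hφ]
    exact (hY.image (hdiff.continuous.comp (.prodMk_right x))).isGreatest_sSup (hYne.image _)
  have hdiffY : ∀ y, Differentiable ℝ fun u => f (u, y) := fun y => by fun_prop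
  have hsmoothY : ∀ y ∈ Y, ∀ u w, ‖fderiv ℝ (fun u => f (u, y)) u -
      fderiv ℝ (fun u => f (u, y)) w‖ ≤ ℓ * ‖u - w‖ := fun y hy =>
    norm_fderiv_comp_prodMk_left_sub_le hdiff fun u w => hsmooth _ _ hy hy
  have hLipY : ∀ y ∈ Y, LipschitzWith (Real.nnabs L) fun u => f (u, y) := fun y hy =>
    lipschitzWith_comp_prodMk_left fun u w => hLip _ _ hy hy
  have hweak := convexOn_add_half_mul_sq_norm_of_isGreatest_image
    (F := fun y u => f (u, y)) hφmax (fun y _ => hdiffY y) hsmoothY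
  choose p hp using exists_isMinOn_add_mul_norm_sub_sq
    (lipschitzWith_of_isGreatest_image hLipY hφmax).continuous hbd hℓ
  set η := γ / √(T + 1)
  have hη : 0 < η := by positivity
  have hstep : ∀ t, η / 2 * ‖gradient (moreauEnvelope φ ℓ) (x t)‖ ^ 2 ≤
      moreauEnvelope φ ℓ (x t) - moreauEnvelope φ ℓ (x (t + 1)) +
        (2 * ℓ * η * ε + ℓ * η ^ 2 * L ^ 2) := fun t => by
    rw [(hasGradientAt_moreauEnvelope hweak hbd hℓ hp (x t)).gradient, hupdate t, ← sq_abs L]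
    exact moreauEnvelope_sub_smul_le hweak hbd hℓ hη.le (hp (x t))
      (sub_add_inner_gradient_le_of_isGreatest_image (F := fun y u => f (u, y)) hφmax (hyY t)
        (hdiffY (y t)) (hsmoothY _ (hyY t)) (horacle t))
      (by simpa using (hLipY _ (hyY t)).norm_gradient_le (x t))
  calc _ ≤ 2 * (moreauEnvelope φ ℓ (x 0) - sInf (range φ)) / (η * (T + 1)) +
        2 * (2 * ℓ * η * ε + ℓ * η ^ 2 * L ^ 2) / η :=
        avg_le_of_forall_half_mul_le_sub_add hη T hstep
          (sInf_range_le_moreauEnvelope hbd hℓ.le _)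
    _ = _ := by
        have hs : √(T + 1 : ℝ) ^ 2 = T + 1 := Real.sq_sqrt (by positivity)
        simp only [η]
        field_simp
        rw [hs]
        ring

/-- Convergence of gradient descent with an `ε`-approximate max-oracle: for
`ℓ`-smooth, `L`-Lipschitz `f`, `φ (x) := max_{y ∈ Y} f (x, y)`, Moreau
envelope `φM = φ_{1/2ℓ}` and step size `η = γ/√(T+1)`, the iterates
`x_{t+1} = x_t - η ∇_x f (x_t, y_t)` with `y_t` an `ε`-approximate maximizer
satisfy
`(1/(T+1)) ∑_{t ≤ T} ‖∇φ_{1/2ℓ}(x_t)‖² ≤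
  2 ((φ_{1/2ℓ}(x_0) - min φ) + ℓ L² γ²)/(γ √(T+1)) + 4 ℓ ε`. -/
theorem stmt_18 {d₁ d₂ : ℕ}
    (Y : Set (EuclideanSpace ℝ (Fin d₂))) (hY : IsCompact Y) (hYne : Y.Nonempty)
    (f : EuclideanSpace ℝ (Fin d₁) × EuclideanSpace ℝ (Fin d₂) → ℝ)
    (ℓ L : ℝ) (hℓ : 0 < ℓ)
    (hdiff : Differentiable ℝ f)
    (hsmooth : ∀ z z' : EuclideanSpace ℝ (Fin d₁) × EuclideanSpace ℝ (Fin d₂),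
      z.2 ∈ Y → z'.2 ∈ Y → ‖fderiv ℝ f z - fderiv ℝ f z'‖ ≤ ℓ * ‖z - z'‖)
    (hLip : ∀ z z' : EuclideanSpace ℝ (Fin d₁) × EuclideanSpace ℝ (Fin d₂),
      z.2 ∈ Y → z'.2 ∈ Y → |f z - f z'| ≤ L * ‖z - z'‖)
    (φ φM : EuclideanSpace ℝ (Fin d₁) → ℝ)
    (hφ : φ = fun x => sSup ((fun y => f (x, y)) '' Y))
    (hφM : φM = fun x => sInf (Set.range fun x' => φ x' + ℓ * ‖x - x'‖ ^ 2))
    (hbd : BddBelow (Set.range φ))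
    (ε γ : ℝ) (hε : 0 ≤ ε) (hγ : 0 < γ) (T : ℕ)
    (x : ℕ → EuclideanSpace ℝ (Fin d₁)) (y : ℕ → EuclideanSpace ℝ (Fin d₂))
    (hyY : ∀ t, y t ∈ Y)
    (horacle : ∀ t, ∀ y' ∈ Y, f (x t, y') ≤ f (x t, y t) + ε)
    (hupdate : ∀ t, x (t + 1) =
      x t - (γ / Real.sqrt (T + 1)) • gradient (fun x' => f (x', y t)) (x t)) :
    (1 / (T + 1 : ℝ)) * ∑ t ∈ Finset.range (T + 1), ‖gradient φM (x t)‖ ^ 2 ≤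
      2 * ((φM (x 0) - sInf (Set.range φ)) + ℓ * L ^ 2 * γ ^ 2) /
          (γ * Real.sqrt (T + 1)) +
        4 * ℓ * ε :=
  stmt_18_general Y hY hYne f ℓ L hℓ hdiff hsmooth hLip φ φM hφ hφM hbd ε γ hγ T x y hyY horacle
    hupdate
end
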